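/- arXiv:2009.08053 — 7 statements merged into one kernel-verified Lean document; each statement's English description precedes it below -/
import Mathlib

section
/- For a root of unity λ, the element 1 − λ is a unit in the ring ℤ[λ] if and only if the order of λ is not 1 and not a power of a prime number. -/
/-!
If `λ` has order `n`, the elements `1 - λ ^ j` with `j` coprime to `n` are all associate to
`1 - λ` in `ℤ[λ]`, and their product is `Φₙ(1)`, which is `0` for `n = 1`, `p` for `n = pᵏ` and
`1` otherwise. As `ℤ[λ]` is integral over `ℤ`, an integer is a unit in `ℤ[λ]` only if it is `±1`.
-/

open Polynomial

theorem Polynomial.isUnit_eval_one_cyclotomic_int_iff (n : ℕ) :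
    IsUnit ((cyclotomic n ℤ).eval 1) ↔ n ≠ 1 ∧ ¬IsPrimePow n := by
  by_cases h1 : n = 1
  · simp [h1]
  by_cases hpp : IsPrimePow n
  · obtain ⟨p, k, hp, hk, rfl⟩ := (isPrimePow_nat_iff n).mp hpp
    have : Fact p.Prime := ⟨hp⟩
    obtain ⟨k, rfl⟩ := Nat.exists_eq_add_of_lt hk
    rw [eval_one_cyclotomic_prime_pow, Int.isUnit_iff]
    have := hp.one_lt
    simp only [hpp, not_true_eq_false, and_false, iff_false]
    omega
  · rw [eval_one_cyclotomic_not_prime_pow fun hp k hk => hpp ?_]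
    · simp [h1, hpp]
    · rcases k with _ | k
      · exact absurd hk.symm (by simpa using h1)
      · exact hk ▸ hp.isPrimePow.pow k.succ_ne_zero

namespace IsPrimitiveRoot

variable {A : Type*} [CommRing A] [IsDomain A] {n : ℕ} {ζ μ : A}

theorem isUnit_one_sub_iff_of_isPrimitiveRoot [NeZero n] (hζ : IsPrimitiveRoot ζ n)
    (hμ : IsPrimitiveRoot μ n) : IsUnit (1 - μ) ↔ IsUnit (1 - ζ) := by
  obtain ⟨j, -, hj, rfl⟩ := hζ.isPrimitiveRoot_iff.mp hμ
  rw [← neg_sub, IsUnit.neg_iff, ← neg_sub ζ 1, IsUnit.neg_iff]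
  exact (hζ.associated_sub_one_pow_sub_one_of_coprime hj).isUnit_iff.symm

theorem isUnit_one_sub_iff_isUnit_eval_one_cyclotomic [NeZero n] (hζ : IsPrimitiveRoot ζ n) :
    IsUnit (1 - ζ) ↔ IsUnit ((cyclotomic n A).eval 1) := by
  have hmem : ζ ∈ primitiveRoots n A := (mem_primitiveRoots (NeZero.pos n)).mpr hζ
  simp only [cyclotomic_eq_prod_X_sub_primitiveRoots hζ, eval_prod, eval_sub, eval_X, eval_C,
    IsUnit.prod_iff]
  refine ⟨fun h μ hμ => ?_, fun h => h ζ hmem⟩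
  exact (hζ.isUnit_one_sub_iff_of_isPrimitiveRoot (isPrimitiveRoot_of_mem_primitiveRoots hμ)).mpr h

theorem isUnit_one_sub_iff [CharZero A] [Algebra.IsIntegral ℤ A] [NeZero n]
    (hζ : IsPrimitiveRoot ζ n) : IsUnit (1 - ζ) ↔ n ≠ 1 ∧ ¬IsPrimePow n := by
  rw [hζ.isUnit_one_sub_iff_isUnit_eval_one_cyclotomic, ← map_cyclotomic_int, eval_one_map,
    ← algebraMap_int_eq, isUnit_map_iff, isUnit_eval_one_cyclotomic_int_iff]

end IsPrimitiveRoot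

/-- Theorem 4.5 (b): for a root of unity `λ`, the element `1 - λ` is a unit in `ℤ[λ]`
if and only if the order of `λ` is neither `1` nor a power of a prime number. -/
theorem one_sub_rootOfUnity_isUnit_iff (lam : ℂ) (h : ∃ n : ℕ, 0 < n ∧ lam ^ n = 1) :
    IsUnit (⟨1 - lam, Subalgebra.sub_mem _ (Subalgebra.one_mem _)
        (Algebra.self_mem_adjoin_singleton ℤ lam)⟩ : Algebra.adjoin ℤ {lam}) ↔
      (orderOf lam ≠ 1 ∧ ¬ IsPrimePow (orderOf lam)) := by
  obtain ⟨n, hn, hpow⟩ := h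
  have hint : IsIntegral ℤ lam := .of_pow hn (hpow ▸ isIntegral_one)
  have : Algebra.IsIntegral ℤ (Algebra.adjoin ℤ {lam}) :=
    .adjoin fun x hx => (Set.mem_singleton_iff.mp hx) ▸ hint
  have : NeZero (orderOf lam) :=
    ⟨(isOfFinOrder_iff_pow_eq_one.mpr ⟨n, hn, hpow⟩).orderOf_pos.ne'⟩
  have hζ : IsPrimitiveRoot (⟨lam, Algebra.self_mem_adjoin_singleton ℤ lam⟩ :
      Algebra.adjoin ℤ {lam}) (orderOf lam) :=
    .of_map_of_injective (f := (Algebra.adjoin ℤ {lam}).val) (.orderOf lam) Subtype.val_injective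
  exact hζ.isUnit_one_sub_iff
end

section
/- For two positive integers m and n with m ≠ n, the resultant Res(Φ_m, Φ_n) of the cyclotomic polynomials Φ_m and Φ_n equals 1 whenever neither m/n nor n/m is a power of a prime number (including the case gcd(m,n)>1). -/
/-- The Sylvester-type matrix `A(f,g)` of two integer polynomials: its first
`deg g` columns contain the coefficients of `f, tf, ..., t^{deg g - 1} f` and its last
`deg f` columns contain the coefficients of `g, tg, ..., t^{deg f - 1} g`,
all expressed in the basis `1, t, ..., t^{deg f + deg g - 1}`. -/
noncomputable def sylvesterMatrix (f g : Polynomial ℤ) :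
    Matrix (Fin (f.natDegree + g.natDegree)) (Fin (f.natDegree + g.natDegree)) ℤ :=
  Matrix.of fun i j =>
    if (j : ℕ) < g.natDegree then (Polynomial.X ^ (j : ℕ) * f).coeff (i : ℕ)
    else (Polynomial.X ^ ((j : ℕ) - g.natDegree) * g).coeff (i : ℕ)

/-- The resultant `Res(f,g)` of two integer polynomials, as the determinant of the
Sylvester matrix. -/
noncomputable def res (f g : Polynomial ℤ) : ℤ := (sylvesterMatrix f g).det

open Polynomial Matrix Equiv
open Fin.NatCast


noncomputable def sylv (R : Type*) [CommRing R] (f g : R[X]) (df dg : ℕ) :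
    Matrix (Fin (df + dg)) (Fin (df + dg)) R :=
  Matrix.of fun i j =>
    if (j : ℕ) < dg then (X ^ (j : ℕ) * f).coeff (i : ℕ)
    else (X ^ ((j : ℕ) - dg) * g).coeff (i : ℕ)

noncomputable def rmat (R : Type*) [CommRing R] (f g : R[X]) (d : ℕ) :
    Matrix (Fin d) (Fin d) R :=
  Matrix.of fun i j => ((X ^ (j : ℕ) * g) %ₘ f).coeff (i : ℕ)

theorem addRight_eq_pow_finRotate (n k : ℕ) :
    Equiv.addRight ((k : Fin (n+1))) = (finRotate (n+1)) ^ k := by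
  induction k with
  | zero => ext x; simp
  | succ k ih =>
      ext x
      rw [pow_succ]
      simp only [Equiv.Perm.mul_apply, ← ih]
      simp only [coe_addRight, finRotate_succ_apply]
      push_cast
      rw [add_comm (k : Fin (n+1)) 1, add_assoc]

theorem sign_addRight (n k : ℕ) :
    Equiv.Perm.sign (Equiv.addRight ((k : Fin (n+1)))) = (-1) ^ (n * k) := by
  rw [addRight_eq_pow_finRotate, map_pow, sign_finRotate, ← pow_mul, Nat.add_sub_cancel]

theorem sign_addRight' (N k : ℕ) [NeZero N] :
    Equiv.Perm.sign (Equiv.addRight ((k : Fin N))) = (-1) ^ ((N - 1) * k) := by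
  obtain ⟨n, rfl⟩ : ∃ n, N = n + 1 :=
    ⟨N - 1, (Nat.succ_pred_eq_of_pos (Nat.pos_of_ne_zero (NeZero.ne N))).symm⟩
  simpa using sign_addRight n k

theorem coeff_mul_expand {R : Type*} [CommRing R] (q f : R[X]) (dg : ℕ)
    (hq : q.natDegree < dg) (i : ℕ) :
    ∑ b ∈ Finset.range dg, (X ^ b * f).coeff i * q.coeff b = (q * f).coeff i := by
  conv_rhs => rw [q.as_sum_range' dg hq]
  rw [Finset.sum_mul, finset_sum_coeff]
  apply Finset.sum_congr rfl
  intro b _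
  rw [← C_mul_X_pow_eq_monomial, mul_assoc, coeff_C_mul]
  ring

theorem det_sylv {R : Type*} [CommRing R] [Nontrivial R] (f g : R[X]) (df dg : ℕ)
    (hf : f.Monic) (hdf : f.natDegree = df) (hg : g.natDegree ≤ dg)
    (hdf0 : 0 < df) (hdg0 : 0 < dg) :
    (sylv R f g df dg).det = (-1) ^ (df * dg) * (rmat R f g df).det := by
  haveI : NeZero (df + dg) := ⟨by omega⟩
  -- the triangular change-of-basis matrix
  set P : Matrix (Fin (df + dg)) (Fin (df + dg)) R :=
    Matrix.of (fun i c =>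
      if (c : ℕ) < df then (if (i : ℕ) = (c : ℕ) then 1 else 0)
      else (X ^ ((c : ℕ) - df) * f).coeff (i : ℕ)) with hP
  set M : Matrix (Fin (df + dg)) (Fin (df + dg)) R :=
    Matrix.of (fun i c =>
      if (c : ℕ) < dg then (if (i : ℕ) = df + (c : ℕ) then 1 else 0)
      else if (i : ℕ) < df then ((X ^ ((c : ℕ) - dg) * g) %ₘ f).coeff (i : ℕ)
        else ((X ^ ((c : ℕ) - dg) * g) /ₘ f).coeff ((i : ℕ) - df)) with hM
  set Q : Matrix (Fin dg) (Fin df) R :=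
    Matrix.of (fun a b => ((X ^ (b : ℕ) * g) /ₘ f).coeff (a : ℕ)) with hQ
  have hq : ∀ c : ℕ, c < df → ((X ^ c * g) /ₘ f).natDegree < dg := by
    intro c hc
    have h1 : (X ^ c * g).natDegree ≤ c + dg :=
      le_trans (natDegree_mul_le) (by rw [natDegree_X_pow]; omega)
    have := natDegree_divByMonic (X ^ c * g) hf
    omega
  have hr : ∀ (p : R[X]) (k : ℕ), df ≤ k → (p %ₘ f).coeff k = 0 := by
    intro p k hk
    apply coeff_eq_zero_of_degree_lt
    refine lt_of_lt_of_le (degree_modByMonic_lt p hf) ?_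
    rw [degree_eq_natDegree hf.ne_zero, hdf]
    exact_mod_cast Nat.cast_le.mpr hk
  have hPM : sylv R f g df dg = P * M := by
    ext i c
    rw [Matrix.mul_apply]
    simp only [sylv, Matrix.of_apply]
    by_cases hc : (c : ℕ) < dg
    · rw [if_pos hc]
      rw [Finset.sum_eq_single (⟨df + (c : ℕ), by omega⟩ : Fin (df + dg))]
      · have h1 : M (⟨df + (c : ℕ), by omega⟩ : Fin (df + dg)) c = 1 := by
          rw [hM]; simp only [Matrix.of_apply]; rw [if_pos hc]; simp
        have h2 : P i (⟨df + (c : ℕ), by omega⟩ : Fin (df + dg)) =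
            (X ^ (c : ℕ) * f).coeff (i : ℕ) := by
          rw [hP]; simp only [Matrix.of_apply, Fin.val_mk]
          rw [if_neg (by omega), Nat.add_sub_cancel_left]
        rw [h1, h2, mul_one]
      · intro k _ hk
        have : M k c = 0 := by
          rw [hM]; simp only [Matrix.of_apply]; rw [if_pos hc, if_neg]
          intro hkk
          exact hk (Fin.ext (by simpa using hkk))
        rw [this, mul_zero]
      · intro h; exact absurd (Finset.mem_univ _) h
    · rw [if_neg hc]
      have hcd : (c : ℕ) - dg < df := by have := c.isLt; omega
      set r : R[X] := (X ^ ((c : ℕ) - dg) * g) %ₘ f with hrdef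
      set q : R[X] := (X ^ ((c : ℕ) - dg) * g) /ₘ f with hqdef
      have hsum : ∀ k : Fin (df + dg), P i k * M k c =
          (fun k : Fin (df + dg) => P i k * M k c) k := fun _ => rfl
      rw [Fin.sum_univ_add (fun k : Fin (df + dg) => P i k * M k c)]
      have hfirst : ∑ a : Fin df, P i (Fin.castAdd dg a) * M (Fin.castAdd dg a) c =
          r.coeff (i : ℕ) := by
        have hMa : ∀ a : Fin df, M (Fin.castAdd dg a) c = r.coeff (a : ℕ) := by
          intro a
          rw [hM]; simp only [Matrix.of_apply, Fin.coe_castAdd]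
          rw [if_neg hc, if_pos a.isLt]
        have hPa : ∀ a : Fin df, P i (Fin.castAdd dg a) =
            (if (i : ℕ) = (a : ℕ) then 1 else 0) := by
          intro a
          rw [hP]; simp only [Matrix.of_apply, Fin.coe_castAdd]
          rw [if_pos a.isLt]
        by_cases hi : (i : ℕ) < df
        · rw [Finset.sum_eq_single (⟨(i : ℕ), hi⟩ : Fin df)]
          · rw [hMa, hPa]; simp
          · intro b _ hb
            rw [hMa, hPa, if_neg, zero_mul]
            intro hib
            exact hb (Fin.ext (by simpa using hib.symm))
          · intro h; exact absurd (Finset.mem_univ _) h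
        · rw [hr _ _ (by omega)]
          apply Finset.sum_eq_zero
          intro b _
          rw [hMa, hPa, if_neg (by omega), zero_mul]
      have hsecond : ∑ b : Fin dg, P i (Fin.natAdd df b) * M (Fin.natAdd df b) c =
          (q * f).coeff (i : ℕ) := by
        have hstep : ∀ b : Fin dg, P i (Fin.natAdd df b) * M (Fin.natAdd df b) c =
            (X ^ (b : ℕ) * f).coeff (i : ℕ) * q.coeff (b : ℕ) := by
          intro b
          have h1 : P i (Fin.natAdd df b) = (X ^ (b : ℕ) * f).coeff (i : ℕ) := by
            rw [hP]; simp only [Matrix.of_apply, Fin.coe_natAdd]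
            rw [if_neg (by omega)]
            congr 3
            omega
          have h2 : M (Fin.natAdd df b) c = q.coeff (b : ℕ) := by
            rw [hM]; simp only [Matrix.of_apply, Fin.coe_natAdd]
            rw [if_neg hc, if_neg (by omega)]
            congr 1
            omega
          rw [h1, h2]
        rw [Finset.sum_congr rfl (fun b _ => hstep b)]
        rw [← coeff_mul_expand q f dg (hq _ hcd) (i : ℕ)]
        exact Fin.sum_univ_eq_sum_range (fun t => (X ^ t * f).coeff (i : ℕ) * q.coeff t) dg
      rw [hfirst, hsecond, ← coeff_add]
      have h5 : r + q * f = X ^ ((c : ℕ) - dg) * g := by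
        rw [mul_comm]
        exact modByMonic_add_div (X ^ ((c : ℕ) - dg) * g) f
      rw [h5]
  have hPdet : P.det = 1 := by
    have htri : P.BlockTriangular id := by
      intro i j hij
      rw [hP]; simp only [Matrix.of_apply]
      by_cases hj : (j : ℕ) < df
      · rw [if_pos hj, if_neg]
        have : (j : ℕ) < (i : ℕ) := hij
        omega
      · rw [if_neg hj]
        apply coeff_eq_zero_of_natDegree_lt
        have hnd : (X ^ ((j : ℕ) - df) * f).natDegree = (j : ℕ) := by
          rw [(monic_X_pow _).natDegree_mul hf, natDegree_X_pow, hdf]; omega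
        rw [hnd]; exact hij
    rw [Matrix.det_of_upperTriangular htri]
    apply Finset.prod_eq_one
    intro i _
    rw [hP]; simp only [Matrix.of_apply]
    by_cases hi : (i : ℕ) < df
    · rw [if_pos hi]; simp
    · rw [if_neg hi]
      have hmon : (X ^ ((i : ℕ) - df) * f).Monic := (monic_X_pow _).mul hf
      have hnd : (X ^ ((i : ℕ) - df) * f).natDegree = (i : ℕ) := by
        rw [(monic_X_pow _).natDegree_mul hf, natDegree_X_pow, hdf]; omega
      have := hmon.coeff_natDegree
      rwa [hnd] at this
  set τ : Equiv.Perm (Fin (df + dg)) := Equiv.addRight ((dg : Fin (df + dg))) with hτdef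
  have hτ : ∀ x : Fin (df + dg), ((τ x : Fin (df + dg)) : ℕ) =
      if (x : ℕ) < df then (x : ℕ) + dg else (x : ℕ) - df := by
    intro x
    have hdgval : ((dg : Fin (df + dg)) : ℕ) = dg := by
      rw [Fin.val_natCast]; exact Nat.mod_eq_of_lt (by omega)
    have hval : ((τ x : Fin (df + dg)) : ℕ) = ((x : ℕ) + dg) % (df + dg) := by
      rw [hτdef]; simp only [Equiv.coe_addRight]; rw [Fin.add_def, hdgval]
    rw [hval]
    by_cases h : (x : ℕ) < df
    · rw [if_pos h]; exact Nat.mod_eq_of_lt (by omega)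
    · rw [if_neg h]
      have hx : (x : ℕ) + dg = ((x : ℕ) - df) + 1 * (df + dg) := by
        have := x.isLt; omega
      rw [hx, Nat.add_mul_mod_self_right]
      exact Nat.mod_eq_of_lt (by have := x.isLt; omega)
  have hblock : (M.submatrix id ⇑τ).submatrix finSumFinEquiv finSumFinEquiv =
      fromBlocks (rmat R f g df) 0 Q 1 := by
    ext x y
    cases x with
    | inl a =>
      cases y with
      | inl b =>
        simp only [Matrix.submatrix_apply, finSumFinEquiv_apply_left, id_eq,
          Matrix.fromBlocks_apply₁₁]
        have hcol : ((τ (Fin.castAdd dg b) : Fin (df + dg)) : ℕ) = (b : ℕ) + dg := by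
          rw [hτ]; simp [b.isLt]
        rw [hM]; simp only [Matrix.of_apply, Fin.coe_castAdd]
        rw [hcol, if_neg (by omega), if_pos a.isLt,
          show (b : ℕ) + dg - dg = (b : ℕ) from by omega]
        rw [rmat]; simp only [Matrix.of_apply]
      | inr b =>
        simp only [Matrix.submatrix_apply, finSumFinEquiv_apply_left,
          finSumFinEquiv_apply_right, id_eq, Matrix.fromBlocks_apply₁₂]
        have hcol : ((τ (Fin.natAdd df b) : Fin (df + dg)) : ℕ) = (b : ℕ) := by
          rw [hτ]; simp only [Fin.coe_natAdd]; rw [if_neg (by omega)]; omega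
        rw [hM]; simp only [Matrix.of_apply, Fin.coe_castAdd]
        rw [hcol, if_pos b.isLt, if_neg (by have := a.isLt; omega)]
        simp
    | inr a =>
      cases y with
      | inl b =>
        simp only [Matrix.submatrix_apply, finSumFinEquiv_apply_left,
          finSumFinEquiv_apply_right, id_eq, Matrix.fromBlocks_apply₂₁]
        have hcol : ((τ (Fin.castAdd dg b) : Fin (df + dg)) : ℕ) = (b : ℕ) + dg := by
          rw [hτ]; simp [b.isLt]
        rw [hM]; simp only [Matrix.of_apply, Fin.coe_natAdd]
        rw [hcol, if_neg (by omega), if_neg (by omega),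
          show (b : ℕ) + dg - dg = (b : ℕ) from by omega,
          show df + (a : ℕ) - df = (a : ℕ) from by omega]
        rw [hQ]; simp only [Matrix.of_apply]
      | inr b =>
        simp only [Matrix.submatrix_apply, finSumFinEquiv_apply_right, id_eq,
          Matrix.fromBlocks_apply₂₂]
        have hcol : ((τ (Fin.natAdd df b) : Fin (df + dg)) : ℕ) = (b : ℕ) := by
          rw [hτ]; simp only [Fin.coe_natAdd]; rw [if_neg (by omega)]; omega
        rw [hM]; simp only [Matrix.of_apply, Fin.coe_natAdd]
        rw [hcol, if_pos b.isLt]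
        rw [Matrix.one_apply]
        by_cases hab : a = b
        · rw [if_pos (by rw [hab]), if_pos hab]
        · rw [if_neg, if_neg hab]
          intro hcon
          exact hab (Fin.ext (by omega))
  have hsign : Equiv.Perm.sign τ = (-1) ^ ((df + dg - 1) * dg) := sign_addRight' (df + dg) dg
  have hdet1 : (M.submatrix id ⇑τ).det = (rmat R f g df).det := by
    rw [← det_submatrix_equiv_self finSumFinEquiv (M.submatrix id ⇑τ), hblock,
      det_fromBlocks_zero₁₂, det_one, mul_one]
  have hdet2 : (M.submatrix id ⇑τ).det = ((-1 : R)) ^ ((df + dg - 1) * dg) * M.det := by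
    rw [det_permute' τ M, hsign]
    push_cast
    simp
  have hMdet : M.det = ((-1 : R)) ^ ((df + dg - 1) * dg) * (rmat R f g df).det := by
    rw [← hdet1, hdet2, ← mul_assoc, ← pow_add]
    have : Even ((df + dg - 1) * dg + (df + dg - 1) * dg) := Even.add_self _
    rw [this.neg_one_pow, one_mul]
  have hpow : ((-1 : R)) ^ ((df + dg - 1) * dg) = (-1 : R) ^ (df * dg) := by
    have h1 : (df + dg - 1) * dg = df * dg + (dg - 1) * dg := by
      have : df + dg - 1 = df + (dg - 1) := by omega
      rw [this, add_mul]
    have h2 : Even ((dg - 1) * dg) := by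
      have h3 : dg - 1 + 1 = dg := by omega
      have := Nat.even_mul_succ_self (dg - 1)
      rwa [h3] at this
    rw [h1, pow_add, h2.neg_one_pow, mul_one]
  rw [hPM, det_mul, hPdet, one_mul, hMdet, hpow]

theorem modByMonic_congr {R : Type*} [CommRing R] {f a b : R[X]} (hf : f.Monic)
    (h : f ∣ a - b) : a %ₘ f = b %ₘ f := by
  have h1 : a %ₘ f - b %ₘ f = (a - b) %ₘ f := (sub_modByMonic a b f).symm
  rw [(modByMonic_eq_zero_iff_dvd hf).mpr h] at h1
  exact sub_eq_zero.mp h1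

theorem rmat_congr {R : Type*} [CommRing R] (f g₁ g₂ : R[X]) (d : ℕ) (hf : f.Monic)
    (h : f ∣ g₁ - g₂) : rmat R f g₁ d = rmat R f g₂ d := by
  ext i j
  simp only [rmat, Matrix.of_apply]
  rw [modByMonic_congr hf (by rw [← mul_sub]; exact Dvd.dvd.mul_left h _)]

theorem rmat_one {R : Type*} [CommRing R] [Nontrivial R] (f : R[X]) (hf : f.Monic) :
    rmat R f 1 f.natDegree = 1 := by
  ext i j
  simp only [rmat, Matrix.of_apply, mul_one]
  rw [(modByMonic_eq_self_iff hf).mpr]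
  · rw [coeff_X_pow, Matrix.one_apply]
    by_cases h : (i : ℕ) = (j : ℕ)
    · rw [if_pos h, if_pos (Fin.ext h)]
    · rw [if_neg h, if_neg (fun hc => h (congrArg Fin.val hc))]
  · rw [degree_X_pow, degree_eq_natDegree hf.ne_zero]
    exact_mod_cast j.isLt

theorem rmat_mul {R : Type*} [CommRing R] [Nontrivial R] (f g₁ g₂ : R[X]) (hf : f.Monic) :
    rmat R f (g₁ * g₂) f.natDegree = rmat R f g₁ f.natDegree * rmat R f g₂ f.natDegree := by
  rcases Nat.eq_zero_or_pos f.natDegree with hd | hd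
  · apply Matrix.ext; intro i; exact absurd i.isLt (by omega)
  ext i j
  rw [Matrix.mul_apply]
  simp only [rmat, Matrix.of_apply]
  set r := (X ^ (j : ℕ) * g₂) %ₘ f with hrdef
  have hrd : r.natDegree < f.natDegree := by
    rcases eq_or_ne r 0 with h | h
    · rw [h, natDegree_zero]; exact hd
    · have h2 := degree_modByMonic_lt (X ^ (j : ℕ) * g₂) hf
      rw [← hrdef] at h2
      exact natDegree_lt_natDegree h h2
  have key : ((r * g₁) %ₘ f).coeff (i : ℕ) =
      ∑ b ∈ Finset.range f.natDegree, ((X ^ b * g₁) %ₘ f).coeff (i : ℕ) * r.coeff b := by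
    conv_lhs => rw [r.as_sum_range' f.natDegree hrd]
    rw [Finset.sum_mul]
    have hs : (∑ b ∈ Finset.range f.natDegree, (monomial b (r.coeff b)) * g₁) %ₘ f =
        ∑ b ∈ Finset.range f.natDegree, ((monomial b (r.coeff b)) * g₁) %ₘ f :=
      map_sum (Polynomial.modByMonicHom f) _ _
    rw [hs, finset_sum_coeff]
    apply Finset.sum_congr rfl
    intro b _
    have h6 : (monomial b (r.coeff b)) * g₁ = r.coeff b • (X ^ b * g₁) := by
      rw [← C_mul_X_pow_eq_monomial, smul_eq_C_mul]; ring
    rw [h6, smul_modByMonic, coeff_smul, smul_eq_mul, mul_comm]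
  have hcong : (X ^ (j : ℕ) * (g₁ * g₂)) %ₘ f = (r * g₁) %ₘ f := by
    apply modByMonic_congr hf
    have : X ^ (j : ℕ) * (g₁ * g₂) - r * g₁ = g₁ * (X ^ (j : ℕ) * g₂ - r) := by ring
    rw [this]
    apply Dvd.dvd.mul_left
    refine ⟨(X ^ (j : ℕ) * g₂) /ₘ f, ?_⟩
    have h7 := modByMonic_add_div (X ^ (j : ℕ) * g₂) f
    rw [← hrdef] at h7
    linear_combination -h7
  rw [hcong, key, Fin.sum_univ_eq_sum_range
    (fun b => ((X ^ b * g₁) %ₘ f).coeff (i : ℕ) * r.coeff b) f.natDegree]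

theorem det_rmat_ne_zero {K : Type*} [Field K] {f g : K[X]} (hf : f.Monic)
    (hd : 0 < f.natDegree) (h : IsCoprime f g) : (rmat K f g f.natDegree).det ≠ 0 := by
  obtain ⟨a, b, hab⟩ := h
  have h1 : f ∣ b * g - 1 := ⟨-a, by linear_combination hab⟩
  have h2 : rmat K f (b * g) f.natDegree = 1 := by
    rw [rmat_congr f (b * g) 1 f.natDegree hf h1, rmat_one f hf]
  have h3 := rmat_mul f b g hf
  rw [h2] at h3
  intro hdet
  have h4 := congrArg Matrix.det h3
  rw [Matrix.det_one, Matrix.det_mul, hdet, mul_zero] at h4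
  exact one_ne_zero h4


theorem cyclotomic_coprime_zmod (p : ℕ) [Fact p.Prime] {m n : ℕ} (hm : 0 < m) (hn : 0 < n)
    (hmn : m ≠ n)
    (h1 : ¬ ∃ q k : ℕ, q.Prime ∧ 1 ≤ k ∧ m = n * q ^ k)
    (h2 : ¬ ∃ q k : ℕ, q.Prime ∧ 1 ≤ k ∧ n = m * q ^ k) :
    IsCoprime (cyclotomic m (ZMod p)) (cyclotomic n (ZMod p)) := by
  by_contra hnc
  classical
  set K := ZMod p with hK
  set d := EuclideanDomain.gcd (cyclotomic m K) (cyclotomic n K) with hd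
  have hdunit : ¬IsUnit d := fun h => hnc (EuclideanDomain.gcd_isUnit_iff.mp h)
  have hdm : d ∣ cyclotomic m K := EuclideanDomain.gcd_dvd_left _ _
  have hdn : d ∣ cyclotomic n K := EuclideanDomain.gcd_dvd_right _ _
  have hd0 : d ≠ 0 := by
    intro h0
    rw [h0] at hdm
    exact (cyclotomic_ne_zero m K) (zero_dvd_iff.mp hdm)
  set F := AlgebraicClosure K with hF
  haveI : CharP F p := charP_of_injective_algebraMap (algebraMap K F).injective p
  have hdeg : (d.map (algebraMap K F)).degree ≠ 0 := by
    rw [degree_map]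
    intro hdeg0
    exact hdunit (Polynomial.isUnit_iff_degree_eq_zero.mpr hdeg0)
  obtain ⟨x, hx⟩ := IsAlgClosed.exists_root _ hdeg
  have hroot : ∀ N : ℕ, d ∣ cyclotomic N K → (cyclotomic N F).IsRoot x := by
    intro N hdvd
    obtain ⟨c, hc⟩ := hdvd
    have hmap : cyclotomic N F = d.map (algebraMap K F) * c.map (algebraMap K F) := by
      rw [← Polynomial.map_mul, ← hc, map_cyclotomic]
    rw [IsRoot.def, hmap, eval_mul, hx, zero_mul]
  have hxm := hroot m hdm
  have hxn := hroot n hdn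
  set a := m.factorization p with ha
  set m1 := m / p ^ a with hm1def
  have hm1 : ¬ p ∣ m1 := Nat.not_dvd_ordCompl Fact.out hm.ne'
  have hmfac : p ^ a * m1 = m := Nat.ordProj_mul_ordCompl_eq_self m p
  haveI : NeZero ((m1 : F)) := NeZero.of_not_dvd F hm1
  have hxm1 : IsPrimitiveRoot x m1 := by
    rw [← hmfac] at hxm
    exact isRoot_cyclotomic_prime_pow_mul_iff_of_charP.mp hxm
  set b := n.factorization p with hb
  set n1 := n / p ^ b with hn1def
  have hn1 : ¬ p ∣ n1 := Nat.not_dvd_ordCompl Fact.out hn.ne'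
  have hnfac : p ^ b * n1 = n := Nat.ordProj_mul_ordCompl_eq_self n p
  haveI : NeZero ((n1 : F)) := NeZero.of_not_dvd F hn1
  have hxn1 : IsPrimitiveRoot x n1 := by
    rw [← hnfac] at hxn
    exact isRoot_cyclotomic_prime_pow_mul_iff_of_charP.mp hxn
  have heq : m1 = n1 := by rw [hxm1.eq_orderOf, hxn1.eq_orderOf]
  rcases lt_trichotomy a b with hab | hab | hab
  · apply h2
    refine ⟨p, b - a, Fact.out, by omega, ?_⟩
    rw [← hnfac, ← hmfac, heq]
    have hbb : b = a + (b - a) := by omega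
    conv_lhs => rw [hbb, pow_add]
    ring
  · apply hmn
    rw [← hmfac, ← hnfac, heq, hab]
  · apply h1
    refine ⟨p, a - b, Fact.out, by omega, ?_⟩
    rw [← hnfac, ← hmfac, heq]
    have hbb : a = b + (a - b) := by omega
    conv_lhs => rw [hbb, pow_add]
    ring

theorem int_eq_one_or_neg_one_of_no_prime {r : ℤ}
    (h : ∀ p : ℕ, p.Prime → ¬ (p : ℤ) ∣ r) : r = 1 ∨ r = -1 := by
  rcases eq_or_ne r.natAbs 1 with h1 | h1
  · rcases Int.natAbs_eq_iff.mp h1 with h' | h'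
    · left; simpa using h'
    · right; simpa using h'
  · obtain ⟨p, hp, hdvd⟩ := Nat.exists_prime_and_dvd h1
    exact absurd (Int.dvd_natAbs.mp (Int.natCast_dvd_natCast.mpr hdvd)) (h p hp)

theorem sylv_map {R S : Type*} [CommRing R] [CommRing S] (φ : R →+* S) (f g : R[X])
    (df dg : ℕ) : (sylv R f g df dg).map φ = sylv S (f.map φ) (g.map φ) df dg := by
  ext i j
  simp only [sylv, Matrix.map_apply, Matrix.of_apply]
  split_ifs with h
  · rw [show X ^ (j : ℕ) * f.map φ = (X ^ (j : ℕ) * f).map φ from by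
      rw [Polynomial.map_mul, Polynomial.map_pow, map_X], coeff_map]
  · rw [show X ^ ((j : ℕ) - dg) * g.map φ = (X ^ ((j : ℕ) - dg) * g).map φ from by
      rw [Polynomial.map_mul, Polynomial.map_pow, map_X], coeff_map]

theorem det_rmat_eq_prod {K : Type*} [Field K] (d : ℕ) (α : Fin d → K)
    (hinj : Function.Injective α) (g : K[X]) :
    (rmat K (∏ i, (X - C (α i))) g d).det = ∏ i, g.eval (α i) := by
  rcases Nat.eq_zero_or_pos d with hd | hd
  · subst hd
    rw [Matrix.det_fin_zero, Finset.prod_of_isEmpty]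
  set f : K[X] := ∏ i, (X - C (α i)) with hf
  have hmon : f.Monic := monic_prod_of_monic _ _ (fun i _ => monic_X_sub_C _)
  have hdeg : f.natDegree = d := by
    rw [hf, natDegree_prod _ _ (fun i _ => X_sub_C_ne_zero _)]
    simp
  have hrootf : ∀ i, f.eval (α i) = 0 := by
    intro i
    rw [hf, eval_prod]
    apply Finset.prod_eq_zero (Finset.mem_univ i)
    simp
  have hrem : ∀ c : Fin d, ((X ^ (c : ℕ) * g) %ₘ f).natDegree < d := by
    intro c
    set r := (X ^ (c : ℕ) * g) %ₘ f with hr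
    rcases eq_or_ne r 0 with h | h
    · rw [h, natDegree_zero]; exact hd
    · have h2 := degree_modByMonic_lt (X ^ (c : ℕ) * g) hmon
      rw [← hr] at h2
      have := natDegree_lt_natDegree h h2
      omega
  have hVR : (Matrix.vandermonde α) * (rmat K f g d) =
      (Matrix.diagonal fun i => g.eval (α i)) * (Matrix.vandermonde α) := by
    ext i c
    rw [Matrix.mul_apply, Matrix.diagonal_mul]
    have hLHS : ∑ j : Fin d, Matrix.vandermonde α i j * rmat K f g d j c =
        ((X ^ (c : ℕ) * g) %ₘ f).eval (α i) := by
      rw [eval_eq_sum_range' (hrem c) (α i), ← Fin.sum_univ_eq_sum_range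
        (fun t => ((X ^ (c : ℕ) * g) %ₘ f).coeff t * (α i) ^ t) d]
      apply Finset.sum_congr rfl
      intro j _
      rw [Matrix.vandermonde_apply, rmat, Matrix.of_apply, mul_comm]
    rw [hLHS]
    have h5 := modByMonic_add_div (X ^ (c : ℕ) * g) f
    have h6 : ((X ^ (c : ℕ) * g) %ₘ f).eval (α i) = (X ^ (c : ℕ) * g).eval (α i) := by
      conv_rhs => rw [← h5]
      rw [eval_add, eval_mul, hrootf i, zero_mul, add_zero]
    rw [h6, eval_mul, eval_pow, eval_X, Matrix.vandermonde_apply]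
    ring
  have hdV : (Matrix.vandermonde α).det ≠ 0 := by
    rw [Ne, Matrix.det_vandermonde_eq_zero_iff]
    rintro ⟨i, j, hij, hne⟩
    exact hne (hinj hij)
  have hdets := congrArg Matrix.det hVR
  rw [Matrix.det_mul, Matrix.det_mul, Matrix.det_diagonal] at hdets
  rw [mul_comm] at hdets
  exact mul_right_cancel₀ hdV hdets


theorem res_eq (f g : Polynomial ℤ) :
    res f g = (sylv ℤ f g f.natDegree g.natDegree).det := rfl

theorem res_cyclo_cast (K : Type) [Field K] (m n : ℕ) :
    ((res (cyclotomic m ℤ) (cyclotomic n ℤ) : ℤ) : K) =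
      (sylv K (cyclotomic m K) (cyclotomic n K)
        (cyclotomic m ℤ).natDegree (cyclotomic n ℤ).natDegree).det := by
  rw [res_eq]
  rw [show (((sylv ℤ (cyclotomic m ℤ) (cyclotomic n ℤ) (cyclotomic m ℤ).natDegree
      (cyclotomic n ℤ).natDegree).det : ℤ) : K) =
    (Int.castRingHom K) (sylv ℤ (cyclotomic m ℤ) (cyclotomic n ℤ) (cyclotomic m ℤ).natDegree
      (cyclotomic n ℤ).natDegree).det from rfl]
  rw [RingHom.map_det, RingHom.mapMatrix_apply, sylv_map, map_cyclotomic, map_cyclotomic]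

theorem det_sylv_cyclo (K : Type) [Field K] (m n : ℕ) (hm : 0 < m) (hn : 0 < n) :
    ((res (cyclotomic m ℤ) (cyclotomic n ℤ) : ℤ) : K) =
      (-1) ^ ((cyclotomic m ℤ).natDegree * (cyclotomic n ℤ).natDegree) *
        (rmat K (cyclotomic m K) (cyclotomic n K) (cyclotomic m ℤ).natDegree).det := by
  rw [res_cyclo_cast]
  apply det_sylv
  · exact cyclotomic.monic m K
  · rw [natDegree_cyclotomic, natDegree_cyclotomic]
  · rw [natDegree_cyclotomic, natDegree_cyclotomic]
  · rw [natDegree_cyclotomic]; exact Nat.totient_pos.mpr hm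
  · rw [natDegree_cyclotomic]; exact Nat.totient_pos.mpr hn

theorem res_cyclo_pm_one (m n : ℕ) (hm : 0 < m) (hn : 0 < n) (hmn : m ≠ n)
    (h1 : ¬ ∃ p k : ℕ, p.Prime ∧ 1 ≤ k ∧ m = n * p ^ k)
    (h2 : ¬ ∃ p k : ℕ, p.Prime ∧ 1 ≤ k ∧ n = m * p ^ k) :
    res (cyclotomic m ℤ) (cyclotomic n ℤ) = 1 ∨
      res (cyclotomic m ℤ) (cyclotomic n ℤ) = -1 := by
  apply int_eq_one_or_neg_one_of_no_prime
  intro p hp hdvd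
  haveI : Fact p.Prime := ⟨hp⟩
  have h0 : ((res (cyclotomic m ℤ) (cyclotomic n ℤ) : ℤ) : ZMod p) = 0 :=
    (ZMod.intCast_zmod_eq_zero_iff_dvd _ _).mpr hdvd
  rw [det_sylv_cyclo (ZMod p) m n hm hn] at h0
  have hne : (rmat (ZMod p) (cyclotomic m (ZMod p)) (cyclotomic n (ZMod p))
      (cyclotomic m ℤ).natDegree).det ≠ 0 := by
    have hd := det_rmat_ne_zero (cyclotomic.monic m (ZMod p))
      (by rw [natDegree_cyclotomic]; exact Nat.totient_pos.mpr hm)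
      (cyclotomic_coprime_zmod p hm hn hmn h1 h2)
    rwa [show (cyclotomic m (ZMod p)).natDegree = (cyclotomic m ℤ).natDegree from by
      rw [natDegree_cyclotomic, natDegree_cyclotomic]] at hd
  rcases mul_eq_zero.mp h0 with h | h
  · exact pow_ne_zero _ (by norm_num : (-1 : ZMod p) ≠ 0) h
  · exact hne h

theorem res_complex (m n : ℕ) (hm : 0 < m) (hn : 0 < n) :
    ((res (cyclotomic m ℤ) (cyclotomic n ℤ) : ℤ) : ℂ) =
      (-1) ^ (m.totient * n.totient) *
        ∏ μ ∈ primitiveRoots m ℂ, (cyclotomic n ℂ).eval μ := by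
  rw [det_sylv_cyclo ℂ m n hm hn, natDegree_cyclotomic m ℤ, natDegree_cyclotomic n ℤ]
  congr 1
  set s := primitiveRoots m ℂ with hs
  have hcard : s.card = m.totient := Complex.card_primitiveRoots m
  set e : Fin (m.totient) ≃ {x // x ∈ s} := ((s.equivFin).trans (finCongr hcard)).symm with he
  set α : Fin m.totient → ℂ := fun i => ((e i : ℂ)) with hα
  have hinj : Function.Injective α := Subtype.coe_injective.comp e.injective
  have hfeq : cyclotomic m ℂ = ∏ i, (X - C (α i)) := by
    rw [cyclotomic_eq_prod_X_sub_primitiveRoots (Complex.isPrimitiveRoot_exp m hm.ne')]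
    rw [← Finset.prod_coe_sort s (fun μ => X - C μ)]
    exact (Equiv.prod_comp e (fun x : {x // x ∈ s} => X - C (x : ℂ))).symm
  rw [hfeq, det_rmat_eq_prod m.totient α hinj]
  rw [← Finset.prod_coe_sort s (fun μ => (cyclotomic n ℂ).eval μ)]
  exact Equiv.prod_comp e (fun x : {x // x ∈ s} => (cyclotomic n ℂ).eval (x : ℂ))

theorem prod_eval_nonneg (m n : ℕ) (hm3 : 2 < m) :
    ∃ t : ℝ, 0 ≤ t ∧
      ∏ μ ∈ primitiveRoots m ℂ, (cyclotomic n ℂ).eval μ = (t : ℂ) := by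
  classical
  set s := primitiveRoots m ℂ with hs
  set v : ℂ → ℂ := fun μ => (cyclotomic n ℂ).eval μ with hv
  have hmem : ∀ μ ∈ s, IsPrimitiveRoot μ m := fun μ h =>
    (mem_primitiveRoots (by omega)).mp h
  have habs : ∀ μ ∈ s, Complex.normSq μ = 1 := by
    intro μ h
    have h1 : μ ^ m = 1 := (hmem μ h).pow_eq_one
    have h2 : ‖μ‖ ^ m = 1 := by
      rw [← norm_pow, h1]
      exact norm_one
    have h3 : ‖μ‖ = 1 := by
      rcases pow_eq_one_iff_cases.mp h2 with h' | h' | h'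
      · omega
      · exact h'
      · have h4 := norm_nonneg μ
        rw [h'.1] at h4; linarith
    rw [Complex.normSq_eq_norm_sq, h3]; norm_num
  have hconjmem : ∀ μ ∈ s, (starRingEnd ℂ) μ ∈ s := by
    intro μ h
    have h2 : μ * (starRingEnd ℂ) μ = 1 := by
      rw [Complex.mul_conj, habs μ h, Complex.ofReal_one]
    have h1 : μ⁻¹ = (starRingEnd ℂ) μ := inv_eq_of_mul_eq_one_right h2
    rw [← h1]
    exact (mem_primitiveRoots (by omega : 0 < m)).mpr (hmem μ h).inv
  have him : ∀ μ ∈ s, μ.im ≠ 0 := by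
    intro μ h h0
    have h2 : Complex.normSq μ = μ.re ^ 2 := by
      rw [Complex.normSq_apply, h0]; ring
    have h3 : μ.re ^ 2 = 1 := by rw [← h2, habs μ h]
    have h4 : μ = (μ.re : ℂ) := Complex.ext rfl (by simp [h0])
    have h5 : μ ^ 2 = 1 := by
      rw [h4, ← Complex.ofReal_pow, h3, Complex.ofReal_one]
    have h6 := (hmem μ h).dvd_of_pow_eq_one 2 h5
    have := Nat.le_of_dvd (by norm_num) h6
    omega
  have hvconj : ∀ μ : ℂ, v ((starRingEnd ℂ) μ) = (starRingEnd ℂ) (v μ) := by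
    intro μ
    rw [hv]
    simp only
    rw [← map_cyclotomic n (Int.castRingHom ℂ), eval_map, eval_map,
      Polynomial.hom_eval₂ _ (Int.castRingHom ℂ) (starRingEnd ℂ) μ]
    congr 1
    exact RingHom.ext_int _ _
  set sp := s.filter (fun μ => 0 < μ.im) with hsp
  set sn := s.filter (fun μ => μ.im < 0) with hsn
  have hsplit : ∏ μ ∈ s, v μ = (∏ μ ∈ sp, v μ) * ∏ μ ∈ sn, v μ := by
    rw [← Finset.prod_filter_mul_prod_filter_not s (fun μ => 0 < μ.im) v]
    congr 1
    apply Finset.prod_congr _ (fun _ _ => rfl)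
    ext μ
    simp only [Finset.mem_filter, hsn]
    constructor
    · rintro ⟨h, h2⟩
      exact ⟨h, lt_of_le_of_ne (not_lt.mp h2) (him μ h)⟩
    · rintro ⟨h, h2⟩
      exact ⟨h, not_lt.mpr h2.le⟩
  have himg : sn = sp.image (starRingEnd ℂ) := by
    ext μ
    simp only [Finset.mem_image, hsp, hsn, Finset.mem_filter]
    constructor
    · rintro ⟨h, h2⟩
      refine ⟨(starRingEnd ℂ) μ, ⟨hconjmem μ h, by
        simpa using neg_pos.mpr h2⟩, by simp⟩
    · rintro ⟨y, ⟨hy, hy2⟩, rfl⟩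
      refine ⟨hconjmem y hy, by simpa using hy2⟩
  have hprodn : ∏ μ ∈ sn, v μ = ∏ μ ∈ sp, (starRingEnd ℂ) (v μ) := by
    rw [himg, Finset.prod_image (fun a _ b _ h => by
      simpa using congrArg (starRingEnd ℂ) h)]
    exact Finset.prod_congr rfl (fun μ _ => hvconj μ)
  refine ⟨∏ μ ∈ sp, Complex.normSq (v μ),
    Finset.prod_nonneg (fun μ _ => Complex.normSq_nonneg _), ?_⟩
  rw [hsplit, hprodn, ← Finset.prod_mul_distrib, Complex.ofReal_prod]
  exact Finset.prod_congr rfl (fun μ _ => Complex.mul_conj (v μ))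

/-- Theorem 4.5 (d), equation (4.24): `Res(Φ_m, Φ_n) = 1` for distinct positive `m, n`
when neither `m/n` nor `n/m` is a (positive) power of a prime number. -/
theorem resultant_cyclotomic_eq_one (m n : ℕ) (hm : 0 < m) (hn : 0 < n) (hmn : m ≠ n)
    (h1 : ¬ ∃ p k : ℕ, p.Prime ∧ 1 ≤ k ∧ m = n * p ^ k)
    (h2 : ¬ ∃ p k : ℕ, p.Prime ∧ 1 ≤ k ∧ n = m * p ^ k) :
    res (Polynomial.cyclotomic m ℤ) (Polynomial.cyclotomic n ℤ) = 1 := by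
  rcases res_cyclo_pm_one m n hm hn hmn h1 h2 with h | h
  · exact h
  exfalso
  by_cases hm3 : 2 < m
  · obtain ⟨t, ht0, ht⟩ := prod_eval_nonneg m n hm3
    have hres := res_complex m n hm hn
    rw [h, ht] at hres
    have heven : Even (m.totient * n.totient) := (Nat.totient_even hm3).mul_right _
    rw [heven.neg_one_pow, one_mul] at hres
    have ht1 : t = -1 := by
      have hcc : ((t : ℝ) : ℂ) = ((-1 : ℝ) : ℂ) := by
        rw [← hres]; norm_num
      exact Complex.ofReal_inj.mp hcc
    rw [ht1] at ht0
    linarith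
  · have hn3 : 2 < n := by
      by_contra hn3'
      push_neg at hn3'
      interval_cases m
      · interval_cases n
        · exact hmn rfl
        · exact h2 ⟨2, 1, Nat.prime_two, le_refl 1, by norm_num⟩
      · interval_cases n
        · exact h1 ⟨2, 1, Nat.prime_two, le_refl 1, by norm_num⟩
        · exact hmn rfl
    have hresR := det_sylv_cyclo ℝ m n hm hn
    rw [h] at hresR
    have hdm1 : (cyclotomic m ℤ).natDegree = 1 := by
      rw [natDegree_cyclotomic]
      interval_cases m
      · exact Nat.totient_one
      · rfl
    have heven : Even ((cyclotomic m ℤ).natDegree * (cyclotomic n ℤ).natDegree) := by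
      rw [hdm1, one_mul, natDegree_cyclotomic]
      exact Nat.totient_even hn3
    rw [heven.neg_one_pow, one_mul] at hresR
    set x0 : ℝ := if m = 1 then 1 else -1 with hx0
    have hval : (rmat ℝ (cyclotomic m ℝ) (cyclotomic n ℝ)
        (cyclotomic m ℤ).natDegree).det = (cyclotomic n ℝ).eval x0 := by
      rw [hdm1]
      have hfe : cyclotomic m ℝ = ∏ i : Fin 1, (X - C ((fun _ => x0) i)) := by
        rw [Fin.prod_univ_one]
        interval_cases m
        · rw [cyclotomic_one, hx0, if_pos rfl, C_1]
        · rw [cyclotomic_two, hx0, if_neg (by norm_num), map_neg, C_1, sub_neg_eq_add]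
      rw [hfe, det_rmat_eq_prod 1 (fun _ => x0)
        (fun a b _ => Subsingleton.elim a b) (cyclotomic n ℝ), Fin.prod_univ_one]
    rw [hval] at hresR
    have hpos := cyclotomic_pos hn3 x0
    rw [← hresR] at hpos
    norm_num at hpos
end

section
/- Let p be a prime, k ≥ 1 an integer, and n a positive integer with (p,k,n) ≠ (2,1,1). Then Res(Φ_{p^k·n}, Φ_n) = p^{φ(n)}, where φ is Euler's totient function. -/
/-!
`res Φ_{p^k n} Φ_n` is Mathlib's `resultant Φ_n Φ_{p^k n}`, that is `∏ Φ_{p^k n}(η)` over the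
primitive `n`-th roots of unity `η`. Write `n = p^a n'` with `p ∤ n'`. Then
`Φ_{p^k n}(X) = Φ_{p n'}(X^{p^(a+k-1)})`; the map `η ↦ η^(p^a)` sends the primitive `n`-th roots
onto the primitive `n'`-th roots with fibres of size `φ(p^a)`, and `p^(k-1)`-th powers permute the
latter, so the product is `(∏ Φ_{p n'}(η))^φ(p^a)` with `η` now running over the primitive
`n'`-th roots. Differentiating `Φ_{n'}(X^p) = Φ_{p n'}(X) Φ_{n'}(X)` at a root `η` of `Φ_{n'}`
gives `Φ_{p n'}(η) · η Φ_{n'}'(η) = p · η^p Φ_{n'}'(η^p)`. The product of the nonzero numbers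
`η Φ_{n'}'(η)` is invariant under `η ↦ η^p`, hence `∏ Φ_{p n'}(η) = p^φ(n')`.
-/

open Polynomial Finset
open scoped Nat

lemma coeff_X_pow_mul_eq_ite {R : Type*} [Semiring R] (f : R[X]) (a i : ℕ) :
    (X ^ a * f).coeff i = if i ∈ Set.Icc a (a + f.natDegree) then f.coeff (i - a) else 0 := by
  simp only [coeff_X_pow_mul', Set.mem_Icc]
  split_ifs <;> first | rfl | omega | exact coeff_eq_zero_of_natDegree_lt (by omega)

/-- `sylvesterMatrix f g` starts with the shifts of `f`, as Mathlib's `sylvester g f` does. -/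
lemma res_eq_resultant_swap (f g : ℤ[X]) : res f g = resultant g f := by
  rw [res, resultant, ← Matrix.det_submatrix_equiv_self (finCongr (add_comm _ _))]
  congr 1
  ext i j
  simp only [sylvesterMatrix, sylvester, Matrix.submatrix_apply, Matrix.of_apply, finCongr_apply,
    coeff_X_pow_mul_eq_ite]
  refine Fin.addCases (fun j ↦ ?_) (fun j ↦ ?_) j <;> simp

lemma resultant_cyclotomic_eq_prod_eval {K : Type*} [Field K] {n : ℕ} {ζ : K}
    (hζ : IsPrimitiveRoot ζ n) (g : K[X]) :
    resultant (cyclotomic n K) g = ∏ η ∈ primitiveRoots n K, g.eval η := by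
  have hprod := cyclotomic_eq_prod_X_sub_primitiveRoots hζ
  have hsplit : (cyclotomic n K).Splits := hprod ▸ Splits.prod fun η _ ↦ Splits.X_sub_C η
  rw [resultant_eq_prod_eval _ _ _ le_rfl hsplit, (cyclotomic.monic n K).leadingCoeff, one_pow,
    one_mul, hprod, roots_prod_X_sub_C]
  rfl

lemma cyclotomic_expand_pow_eq_cyclotomic {p N : ℕ} (hp : p.Prime) (hpN : p ∣ N) (j : ℕ)
    (R : Type*) [CommRing R] : expand R (p ^ j) (cyclotomic N R) = cyclotomic (N * p ^ j) R := by
  induction j generalizing N with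
  | zero => simp
  | succ j ih =>
    rw [pow_succ, expand_mul, cyclotomic_expand_eq_cyclotomic hp hpN, ih (dvd_mul_left p N),
      mul_assoc, mul_comm p]

lemma MonoidHom.prod_comp_of_surjective {G H M : Type*} [Group G] [Group H] [Fintype G]
    [Fintype H] [CommMonoid M] (f : G →* H) (hf : Function.Surjective f) (F : H → M) :
    ∏ g, F (f g) = (∏ h, F h) ^ (Fintype.card G / Fintype.card H) := by
  classical
  have hfiber (h : H) : #{g | f g = h} = #{g | f g = 1} :=
    card_fiber_eq_of_mem_range f (hf h) (hf 1)
  have hcard : Fintype.card G = Fintype.card H * #{g | f g = 1} := by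
    rw [← card_univ, card_eq_sum_card_fiberwise (f := f) (t := univ) fun _ _ ↦ mem_univ _]
    simp [hfiber]
  rw [Finset.prod_comp, image_univ_of_surjective hf, ← prod_pow]
  refine prod_congr rfl fun h _ ↦ ?_
  rw [hfiber, hcard, Nat.mul_div_cancel_left _ Fintype.card_pos]

section PrimitiveRoots

variable {R M : Type*} [CommRing R] [IsDomain R] [CommMonoid M] {n : ℕ} [NeZero n] {ζ : R}

lemma prod_primitiveRoots_comp_pow_of_coprime {a : ℕ} (ha : a.Coprime n) (F : R → M) :
    ∏ ξ ∈ primitiveRoots n R, F (ξ ^ a) = ∏ ξ ∈ primitiveRoots n R, F ξ := by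
  rw [← prod_attach _ fun ξ ↦ F (ξ ^ a), ← prod_attach _ F]
  exact Equiv.prod_comp (IsPrimitiveRoot.primitiveRootsPowEquivOfCoprime ha)
    fun ξ : primitiveRoots n R ↦ F ξ

lemma IsPrimitiveRoot.prod_primitiveRoots_eq_prod_units (hζ : IsPrimitiveRoot ζ n) (F : R → M) :
    ∏ ξ ∈ primitiveRoots n R, F ξ = ∏ u : (ZMod n)ˣ, F (ζ ^ (u : ZMod n).val) := by
  classical
  have himage : univ.image (fun u : (ZMod n)ˣ ↦ ζ ^ (u : ZMod n).val) = primitiveRoots n R := by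
    ext ξ
    simp only [mem_image, mem_univ, true_and, mem_primitiveRoots (NeZero.pos n)]
    constructor
    · rintro ⟨u, rfl⟩
      exact hζ.pow_of_coprime _ (ZMod.val_coe_unit_coprime u)
    · intro hξ
      obtain ⟨i, hi, hcop, rfl⟩ := hζ.isPrimitiveRoot_iff.1 hξ
      refine ⟨ZMod.unitOfCoprime i hcop, ?_⟩
      simp [ZMod.val_natCast, Nat.mod_eq_of_lt hi]
  have hinj : Function.Injective (fun u : (ZMod n)ˣ ↦ ζ ^ (u : ZMod n).val) := fun u v huv ↦
    Units.ext (ZMod.val_injective n (hζ.pow_inj (ZMod.val_lt _) (ZMod.val_lt _) huv))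
  rw [← himage, prod_image fun u _ v _ huv ↦ hinj huv]

/-- Parametrised by `(ZMod n)ˣ`, the `d`-th power map becomes the reduction
`(ZMod n)ˣ → (ZMod (n / d))ˣ`, a surjective group homomorphism, so all its fibres have the same
size. -/
lemma IsPrimitiveRoot.prod_primitiveRoots_comp_pow (hζ : IsPrimitiveRoot ζ n) {d : ℕ}
    (hd : d ∣ n) (F : R → M) :
    ∏ ξ ∈ primitiveRoots n R, F (ξ ^ d) =
      (∏ η ∈ primitiveRoots (n / d) R, F η) ^ (φ n / φ (n / d)) := by
  have hnd : n / d ∣ n := Nat.div_dvd_of_dvd hd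
  have : NeZero (n / d) := ⟨fun h ↦ NeZero.ne n (Nat.eq_zero_of_dvd_of_div_eq_zero hd h)⟩
  have hη : IsPrimitiveRoot (ζ ^ d) (n / d) :=
    hζ.pow (NeZero.pos n) (Nat.mul_div_cancel' hd).symm
  have hpow (u : (ZMod n)ˣ) :
      (ζ ^ (u : ZMod n).val) ^ d = (ζ ^ d) ^ (ZMod.unitsMap hnd u : ZMod (n / d)).val := by
    rw [← pow_mul, mul_comm, pow_mul]
    refine pow_eq_pow_of_modEq ?_ hη.pow_eq_one
    rw [ZMod.unitsMap_val, ZMod.cast_eq_val, ZMod.val_natCast]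
    exact (Nat.mod_modEq _ _).symm
  rw [hζ.prod_primitiveRoots_eq_prod_units, hη.prod_primitiveRoots_eq_prod_units]
  simp_rw [hpow]
  rw [(ZMod.unitsMap hnd).prod_comp_of_surjective (ZMod.unitsMap_surjective hnd)
      fun w ↦ F ((ζ ^ d) ^ (w : ZMod (n / d)).val),
    ZMod.card_units_eq_totient, ZMod.card_units_eq_totient]

end PrimitiveRoots

section Cyclotomic

variable {K : Type*} [Field K] {n p : ℕ} [NeZero n] {ζ : K}

lemma IsPrimitiveRoot.prod_eval_cyclotomic_mul_prime (hζ : IsPrimitiveRoot ζ n)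
    (hp : p.Prime) (hpn : ¬ p ∣ n) :
    ∏ η ∈ primitiveRoots n K, (cyclotomic (n * p) K).eval η = p ^ φ n := by
  have := hζ.neZero'
  set D : K → K := fun η ↦ η * (derivative (cyclotomic n K)).eval η
  have hroot (η : K) (hη : η ∈ primitiveRoots n K) :
      (cyclotomic (n * p) K).eval η * D η = p * D (η ^ p) := by
    have h := congrArg (fun f ↦ (derivative f).eval η)
      (cyclotomic_expand_eq_cyclotomic_mul hp hpn K)
    simp only [derivative_expand, derivative_mul, eval_mul, eval_add, expand_eval, eval_natCast,
      eval_pow, eval_X, mul_zero, zero_add,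
      (isRoot_cyclotomic_iff.2 (isPrimitiveRoot_of_mem_primitiveRoots hη)).eq_zero] at h
    have hpow : η ^ p = η * η ^ (p - 1) := by rw [← pow_succ', Nat.sub_add_cancel hp.one_le]
    linear_combination (-η) * h - (p * (derivative (cyclotomic n K)).eval (η ^ p)) * hpow
  have hD : ∏ η ∈ primitiveRoots n K, D η ≠ 0 := by
    refine prod_ne_zero_iff.2 fun η hη ↦ mul_ne_zero ?_ ?_
    · exact (isPrimitiveRoot_of_mem_primitiveRoots hη).ne_zero (NeZero.ne n)
    · exact (separable_cyclotomic n K).aeval_derivative_ne_zero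
        (isRoot_cyclotomic_iff.2 (isPrimitiveRoot_of_mem_primitiveRoots hη)).eq_zero
  apply mul_right_cancel₀ hD
  rw [← prod_mul_distrib, prod_congr rfl hroot, prod_mul_distrib, prod_const,
    hζ.card_primitiveRoots, prod_primitiveRoots_comp_pow_of_coprime
      ((Nat.Prime.coprime_iff_not_dvd hp).2 hpn)]

lemma IsPrimitiveRoot.prod_eval_cyclotomic_prime_pow_mul (hζ : IsPrimitiveRoot ζ n)
    (hp : p.Prime) {k : ℕ} (hk : 1 ≤ k) :
    ∏ η ∈ primitiveRoots n K, (cyclotomic (p ^ k * n) K).eval η = p ^ φ n := by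
  obtain ⟨a, n', hpn', rfl⟩ := Nat.exists_eq_pow_mul_and_not_dvd (NeZero.ne n) p hp.ne_one
  have : NeZero n' := ⟨right_ne_zero_of_mul (NeZero.ne (p ^ a * n'))⟩
  have hcop : p.Coprime n' := (Nat.Prime.coprime_iff_not_dvd hp).2 hpn'
  have hexpand : cyclotomic (p ^ k * (p ^ a * n')) K =
      expand K (p ^ a * p ^ (k - 1)) (cyclotomic (n' * p) K) := by
    rw [← pow_add, cyclotomic_expand_pow_eq_cyclotomic hp (dvd_mul_left p n')]
    congr 1
    rw [mul_assoc, ← pow_succ', show a + (k - 1) + 1 = k + a by omega, pow_add]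
    ring
  have hζ' : IsPrimitiveRoot (ζ ^ p ^ a) n' := hζ.pow (NeZero.pos _) rfl
  simp_rw [hexpand, expand_eval, pow_mul]
  rw [hζ.prod_primitiveRoots_comp_pow (dvd_mul_right _ _)
      fun ξ ↦ (cyclotomic (n' * p) K).eval (ξ ^ p ^ (k - 1)),
    Nat.mul_div_cancel_left _ (pow_pos hp.pos a),
    prod_primitiveRoots_comp_pow_of_coprime (F := fun ξ ↦ (cyclotomic (n' * p) K).eval ξ)
      (hcop.pow_left _),
    hζ'.prod_eval_cyclotomic_mul_prime hp hpn', ← pow_mul, Nat.totient_mul (hcop.pow_left _),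
    Nat.mul_div_cancel _ (Nat.totient_pos.2 (NeZero.pos n')), mul_comm]

end Cyclotomic

theorem resultant_cyclotomic_prime_pow_mul_general (p k n : ℕ) (hp : p.Prime) (hk : 1 ≤ k)
    (hn : 0 < n) :
    res (Polynomial.cyclotomic (p ^ k * n) ℤ) (Polynomial.cyclotomic n ℤ)
      = (p : ℤ) ^ Nat.totient n := by
  have : NeZero n := ⟨hn.ne'⟩
  have hζ := Complex.isPrimitiveRoot_exp n hn.ne'
  have hmap : ((resultant (cyclotomic n ℤ) (cyclotomic (p ^ k * n) ℤ) : ℤ) : ℂ) =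
      resultant (cyclotomic n ℂ) (cyclotomic (p ^ k * n) ℂ) := by
    rw [← eq_intCast (Int.castRingHom ℂ), ← resultant_map_map]
    simp only [natDegree_cyclotomic]
    rw [map_cyclotomic, map_cyclotomic]
  apply Int.cast_injective (α := ℂ)
  rw [res_eq_resultant_swap, hmap, resultant_cyclotomic_eq_prod_eval hζ,
    hζ.prod_eval_cyclotomic_prime_pow_mul hp hk]
  norm_cast

/-- Theorem 4.5 (d), equation (4.25): `Res(Φ_{p^k n}, Φ_n) = p^{φ(n)}` for a prime `p`,
`k ≥ 1` and `n ≥ 1` with `(p,k,n) ≠ (2,1,1)`. -/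
theorem resultant_cyclotomic_prime_pow_mul (p k n : ℕ) (hp : p.Prime) (hk : 1 ≤ k)
    (hn : 0 < n) (h : ¬ (p = 2 ∧ k = 1 ∧ n = 1)) :
    res (Polynomial.cyclotomic (p ^ k * n) ℤ) (Polynomial.cyclotomic n ℤ)
      = (p : ℤ) ^ Nat.totient n :=
  resultant_cyclotomic_prime_pow_mul_general p k n hp hk hn
end

section
/- Fix m ≥ 2, a prime p, and k ≥ 1 with k ≤ v_p(m). Then the number of pairs (a,b) of units modulo m such that e^{2πi(a−b)/m} has order exactly p^k equals φ(p^k)·φ(m) if v_p(m) > k, and equals φ(p^k)·φ(m)·(p−2)/(p−1) if v_p(m) = k. If v_p(m) < k the count is 0. -/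
/-!
The root of unity `e((a - b)/m)` has the same order as `a - b` in `ZMod m`. Writing `a = (c + 1) b`
gives `a - b = c b`, which has the additive order of `c`; so the count is `φ(m)` times the number
of `c` of additive order `p^k` with `c + 1` a unit. By the Chinese remainder theorem such a `c`
vanishes away from `p`, which reduces `m` to `p^e`, `e = v_p(m)`. Now `ZMod (p^e)` is local: for
`k < e` the element `c` is a nonunit, so `c + 1` is automatically a unit and `c` ranges over the
`φ(p^k)` elements of order `p^k`; for `k = e` both `c` and `c + 1` must be units, and the nonunits
and their translates by `-1` are disjoint sets of `p^(e-1)` elements each.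
-/

open Complex

section Ring

variable {R S : Type*} [Ring R] [Ring S]

theorem addOrderOf_mul_unit (c : R) (u : Rˣ) : addOrderOf (c * u) = addOrderOf c :=
  (AddAut.mulRight u).addOrderOf_eq c

theorem card_units_prod_addOrderOf_sub (d : ℕ) :
    Nat.card {ab : Rˣ × Rˣ // addOrderOf ((ab.1 : R) - ab.2) = d} =
      Nat.card Rˣ * Nat.card {c : R // addOrderOf c = d ∧ IsUnit (c + 1)} := by
  have hsub (a b : Rˣ) : ((a * b⁻¹ : Rˣ) - 1 : R) * b = a - b := by
    simp [sub_mul, mul_assoc]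
  rw [← Nat.card_prod]
  exact Nat.card_congr
    { toFun ab := (ab.1.2, ⟨(ab.1.1 * ab.1.2⁻¹ : Rˣ) - 1,
        by rw [← addOrderOf_mul_unit _ ab.1.2, hsub, ab.2], by simp⟩)
      invFun bc := ⟨(bc.2.2.2.unit * bc.1, bc.1), by
        simpa [add_mul] using (addOrderOf_mul_unit bc.2.1 bc.1).trans bc.2.2.1⟩
      left_inv ab := by ext <;> simp
      right_inv bc := by ext <;> simp }

theorem RingEquiv.card_addOrderOf_and_isUnit_add_one (e : R ≃+* S) (d : ℕ) :
    Nat.card {c : R // addOrderOf c = d ∧ IsUnit (c + 1)} =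
      Nat.card {c : S // addOrderOf c = d ∧ IsUnit (c + 1)} :=
  Nat.card_congr <| e.toEquiv.subtypeEquiv fun c => by
    simp only [RingEquiv.toEquiv_eq_coe, EquivLike.coe_coe, ← map_one e, ← map_add,
      MulEquiv.isUnit_map e, ← addOrderOf_injective e.toAddMonoidHom e.injective c]
    rfl

theorem Prod.card_addOrderOf_and_isUnit_add_one {d : ℕ}
    (hS : ∀ y : S, (addOrderOf y).Coprime d) :
    Nat.card {c : R × S // addOrderOf c = d ∧ IsUnit (c + 1)} =
      Nat.card {c : R // addOrderOf c = d ∧ IsUnit (c + 1)} := by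
  have key (c : R × S) : addOrderOf c = d ∧ IsUnit (c + 1) ↔
      (addOrderOf c.1 = d ∧ IsUnit (c.1 + 1)) ∧ c.2 = 0 := by
    obtain ⟨x, y⟩ := c
    rw [Prod.addOrderOf, Prod.isUnit_iff]
    constructor
    · rintro ⟨hd, hx, -⟩
      have hy : addOrderOf y = 1 := (hS y).eq_one_of_dvd (hd ▸ Nat.dvd_lcm_right _ _)
      rw [AddMonoid.addOrderOf_eq_one_iff] at hy
      simp_all
    · rintro ⟨⟨hd, hx⟩, rfl⟩
      simp [hd, hx]
  rw [Nat.card_congr ((Equiv.subtypeEquivRight key).trans (Equiv.subtypeProdEquivProd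
      (p := fun x : R => addOrderOf x = d ∧ IsUnit (x + 1)) (q := fun y : S => y = 0))),
    Nat.card_prod, Nat.card_unique (α := {y : S // y = 0}), mul_one]

end Ring

namespace IsLocalRing

variable {R : Type*} [Ring R] [IsLocalRing R]

theorem isUnit_add_one_of_not_isUnit {c : R} (hc : ¬IsUnit c) : IsUnit (c + 1) :=
  (isUnit_or_isUnit_of_isUnit_add (a := c + 1) (b := -c) (by simp)).resolve_right
    (by rwa [IsUnit.neg_iff])

theorem card_isUnit_and_isUnit_add_one_add_two_mul [Finite R] :
    Nat.card {c : R // IsUnit c ∧ IsUnit (c + 1)} + 2 * Nat.card {c : R // ¬IsUnit c} =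
      Nat.card R := by
  classical
  have hdisj : Disjoint (fun c : R => ¬IsUnit c) (fun c => ¬IsUnit (c + 1)) :=
    Pi.disjoint_iff.2 fun _ => Prop.disjoint_iff.2 fun h => h.2 (isUnit_add_one_of_not_isUnit h.1)
  have hshift : Nat.card {c : R // ¬IsUnit (c + 1)} = Nat.card {c : R // ¬IsUnit c} :=
    Nat.card_congr ((Equiv.addRight 1).subtypeEquiv fun c => Iff.rfl)
  have hnot : Nat.card {c : R // ¬(IsUnit c ∧ IsUnit (c + 1))} =
      2 * Nat.card {c : R // ¬IsUnit c} := by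
    rw [Nat.card_congr ((Equiv.subtypeEquivRight fun c => not_and_or).trans
      (subtypeOrEquiv _ _ hdisj)), Nat.card_sum, hshift, two_mul]
  rw [← hnot, ← Nat.card_sum, Nat.card_congr (Equiv.sumCompl _)]

end IsLocalRing

namespace ZMod

theorem orderOf_exp_val_sub_val {m : ℕ} [NeZero m] (a b : ZMod m) :
    orderOf (exp (2 * Real.pi * I * (((a.val : ℂ) - b.val) / m))) = addOrderOf (a - b) := by
  have h := stdAddChar_coe (N := m) ((a.val : ℤ) - b.val)
  push_cast [natCast_zmod_val] at h
  rw [mul_div_assoc] at h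
  rw [← h, ← orderOf_ofAdd_eq_addOrderOf]
  exact orderOf_injective (stdAddChar (N := m)).toMonoidHom
    (fun _ _ h => injective_stdAddChar h) _

theorem addOrderOf_eq_self_iff_isUnit {n : ℕ} [NeZero n] (c : ZMod n) :
    addOrderOf c = n ↔ IsUnit c := by
  obtain ⟨x, rfl⟩ := natCast_zmod_surjective c
  rw [addOrderOf_coe _ (NeZero.ne n), Nat.div_eq_self, isUnit_iff_coprime, Nat.coprime_comm]
  simp [NeZero.ne n, Nat.Coprime]

theorem card_addOrderOf_and_isUnit_add_one_mul {a b d : ℕ} (hab : a.Coprime b)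
    (hdb : d.Coprime b) :
    Nat.card {c : ZMod (a * b) // addOrderOf c = d ∧ IsUnit (c + 1)} =
      Nat.card {c : ZMod a // addOrderOf c = d ∧ IsUnit (c + 1)} := by
  rw [(chineseRemainder hab).card_addOrderOf_and_isUnit_add_one,
    Prod.card_addOrderOf_and_isUnit_add_one]
  intro y
  refine Nat.Coprime.coprime_dvd_left (addOrderOf_dvd_of_nsmul_eq_zero ?_) hdb.symm
  rw [nsmul_eq_mul, natCast_self, zero_mul]

theorem card_addOrderOf_prime_pow_and_isUnit_add_one_eq_ordProj {m p : ℕ} (hp : p.Prime)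
    (hm : m ≠ 0) (k : ℕ) :
    Nat.card {c : ZMod m // addOrderOf c = p ^ k ∧ IsUnit (c + 1)} =
      Nat.card {c : ZMod (p ^ padicValNat p m) // addOrderOf c = p ^ k ∧ IsUnit (c + 1)} := by
  have hcop : p.Coprime (m / p ^ padicValNat p m) := by
    rw [← Nat.factorization_def m hp]
    exact Nat.coprime_ordCompl hp hm
  have hdecomp : p ^ padicValNat p m * (m / p ^ padicValNat p m) = m := by
    rw [← Nat.factorization_def m hp]
    exact Nat.ordProj_mul_ordCompl_eq_self m p
  conv_lhs => rw [← hdecomp]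
  exact card_addOrderOf_and_isUnit_add_one_mul (hcop.pow_left _) (hcop.pow_left _)

theorem isLocalRing_prime_pow {p e : ℕ} (hp : p.Prime) (he : e ≠ 0) :
    IsLocalRing (ZMod (p ^ e)) := by
  have : Nontrivial (ZMod (p ^ e)) := nontrivial_iff.2 (Nat.one_lt_pow he hp.one_lt).ne'
  have : NeZero (p ^ e) := ⟨pow_ne_zero e hp.ne_zero⟩
  have hnonunit (n : ℕ) : (n : ZMod (p ^ e)) ∈ nonunits _ ↔ p ∣ n := by
    rw [mem_nonunits_iff, isUnit_natCast_iff_not_dvd_pow hp (Nat.pos_of_ne_zero he), not_not]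
  refine .of_nonunits_add fun a b ha hb => ?_
  obtain ⟨x, rfl⟩ := natCast_zmod_surjective a
  obtain ⟨y, rfl⟩ := natCast_zmod_surjective b
  rw [hnonunit] at ha hb
  rw [← Nat.cast_add, hnonunit]
  exact dvd_add ha hb

theorem card_not_isUnit_prime_pow {p e : ℕ} (hp : p.Prime) (he : e ≠ 0) :
    Nat.card {c : ZMod (p ^ e) // ¬IsUnit c} = p ^ (e - 1) := by
  have : NeZero (p ^ e) := ⟨pow_ne_zero e hp.ne_zero⟩
  have hunits : Nat.card {c : ZMod (p ^ e) // IsUnit c} = p ^ (e - 1) * (p - 1) := by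
    rw [← Nat.totient_prime_pow hp (Nat.pos_of_ne_zero he), ← card_units_eq_totient,
      ← Nat.card_eq_fintype_card]
    exact Nat.card_range_of_injective Units.val_injective
  have hsum :
      Nat.card {c : ZMod (p ^ e) // IsUnit c} + Nat.card {c : ZMod (p ^ e) // ¬IsUnit c} =
        p ^ e := by
    rw [← Nat.card_sum, Nat.card_congr (Equiv.sumCompl _), Nat.card_zmod]
  have hpow := Nat.pow_pred_mul (x := p) (Nat.pos_of_ne_zero he)
  have := Nat.le_mul_of_pos_right (p ^ (e - 1)) hp.pos
  rw [hunits, Nat.mul_sub_one] at hsum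
  omega

theorem card_addOrderOf_prime_pow_and_isUnit_add_one_of_lt {p e k : ℕ} (hp : p.Prime)
    (hk : k < e) :
    Nat.card {c : ZMod (p ^ e) // addOrderOf c = p ^ k ∧ IsUnit (c + 1)} = (p ^ k).totient := by
  have : NeZero (p ^ e) := ⟨pow_ne_zero e hp.ne_zero⟩
  have := isLocalRing_prime_pow hp (Nat.ne_zero_of_lt hk)
  have hunit (c : ZMod (p ^ e)) (hc : addOrderOf c = p ^ k) : IsUnit (c + 1) := by
    refine IsLocalRing.isUnit_add_one_of_not_isUnit fun hu => ?_
    rw [← addOrderOf_eq_self_iff_isUnit, hc] at hu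
    exact hk.ne (Nat.pow_right_injective hp.two_le hu)
  rw [Nat.card_congr (Equiv.subtypeEquivRight fun c => and_iff_left_of_imp (hunit c)),
    Nat.card_eq_fintype_card, Fintype.card_subtype,
    IsAddCyclic.card_addOrderOf_eq_totient (by rw [card]; exact pow_dvd_pow p hk.le)]

theorem card_addOrderOf_prime_pow_and_isUnit_add_one_self {p e : ℕ} (hp : p.Prime)
    (he : e ≠ 0) :
    Nat.card {c : ZMod (p ^ e) // addOrderOf c = p ^ e ∧ IsUnit (c + 1)} =
      (p - 2) * p ^ (e - 1) := by
  have : NeZero (p ^ e) := ⟨pow_ne_zero e hp.ne_zero⟩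
  have := isLocalRing_prime_pow hp he
  have h := IsLocalRing.card_isUnit_and_isUnit_add_one_add_two_mul (R := ZMod (p ^ e))
  rw [card_not_isUnit_prime_pow hp he, Nat.card_zmod] at h
  have hpow := Nat.pow_pred_mul (x := p) (Nat.pos_of_ne_zero he)
  simp_rw [addOrderOf_eq_self_iff_isUnit]
  rw [Nat.sub_mul, Nat.mul_comm p, hpow]
  exact Nat.eq_sub_of_add_eq h

theorem card_addOrderOf_prime_pow_and_isUnit_add_one_of_gt {p e k : ℕ} (hp : p.Prime)
    (hk : e < k) :
    Nat.card {c : ZMod (p ^ e) // addOrderOf c = p ^ k ∧ IsUnit (c + 1)} = 0 := by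
  have : NeZero (p ^ e) := ⟨pow_ne_zero e hp.ne_zero⟩
  refine @Nat.card_of_isEmpty _ ⟨fun ⟨c, hc, _⟩ => hk.not_ge ?_⟩
  have hdvd : addOrderOf c ∣ Fintype.card (ZMod (p ^ e)) := addOrderOf_dvd_card
  rwa [card, hc, Nat.pow_dvd_pow_iff_le_right hp.one_lt] at hdvd

end ZMod

/-- Theorem 4.5 (c)(iii): for `m ≥ 2`, a prime `p` and `k ≥ 1`, the number of pairs
`(a,b)` of units modulo `m` such that `e((a-b)/m)` has order exactly `p^k` is:
`φ(p^k)·φ(m)` if `v_p(m) > k`; `φ(p^k)·φ(m)·(p-2)/(p-1) = (p-2)·p^{k-1}·φ(m)` if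
`v_p(m) = k`; and `0` if `v_p(m) < k`. -/
theorem card_pairs_order_prime_pow (m p k : ℕ) (hm : 2 ≤ m) (hp : p.Prime) (hk : 1 ≤ k) :
    (k < padicValNat p m →
      Nat.card {ab : (ZMod m)ˣ × (ZMod m)ˣ //
          orderOf (Complex.exp (2 * Real.pi * Complex.I *
            ((((ab.1 : ZMod m).val : ℂ) - ((ab.2 : ZMod m).val : ℂ)) / m))) = p ^ k}
        = Nat.totient (p ^ k) * Nat.totient m) ∧
    (padicValNat p m = k →
      Nat.card {ab : (ZMod m)ˣ × (ZMod m)ˣ //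
          orderOf (Complex.exp (2 * Real.pi * Complex.I *
            ((((ab.1 : ZMod m).val : ℂ) - ((ab.2 : ZMod m).val : ℂ)) / m))) = p ^ k}
        = (p - 2) * p ^ (k - 1) * Nat.totient m) ∧
    (padicValNat p m < k →
      Nat.card {ab : (ZMod m)ˣ × (ZMod m)ˣ //
          orderOf (Complex.exp (2 * Real.pi * Complex.I *
            ((((ab.1 : ZMod m).val : ℂ) - ((ab.2 : ZMod m).val : ℂ)) / m))) = p ^ k}
        = 0) := by
  have : NeZero m := ⟨by omega⟩
  simp_rw [ZMod.orderOf_exp_val_sub_val, card_units_prod_addOrderOf_sub,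
    ZMod.card_addOrderOf_prime_pow_and_isUnit_add_one_eq_ordProj hp (NeZero.ne m),
    Nat.card_eq_fintype_card (α := (ZMod m)ˣ), ZMod.card_units_eq_totient]
  refine ⟨fun hlt => ?_, fun heq => ?_, fun hgt => ?_⟩
  · rw [ZMod.card_addOrderOf_prime_pow_and_isUnit_add_one_of_lt hp hlt, mul_comm]
  · rw [heq, ZMod.card_addOrderOf_prime_pow_and_isUnit_add_one_self hp (by omega), mul_comm]
  · rw [ZMod.card_addOrderOf_prime_pow_and_isUnit_add_one_of_gt hp hgt, mul_zero]
end

section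
/- Let f, g ∈ ℤ[t] be monic with gcd(f,g) = 1 in ℚ[t]. Then the ℤ[t]-modules ℤ[t]/(fg) and (ℤ[t]/(f)) ⊕ (ℤ[t]/(g)) are isomorphic if and only if |Res(f,g)| = 1. -/
/-!
An isomorphism `ℤ[t]/(fg) ≅ ℤ[t]/(f) × ℤ[t]/(g)` makes the product a cyclic module, and a cyclic
`R/I × R/J` forces `I + J = R`; conversely, when `I + J = R` the Chinese remainder theorem provides
the isomorphism. So the theorem says that `f` and `g` are coprime in `ℤ[t]` exactly when their
resultant is a unit. The matrix `sylvesterMatrix f g` is `Polynomial.sylvester g f` with rows and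
columns relabelled, so `res f g = resultant g f`, and that equivalence is
`Polynomial.isUnit_resultant_iff_isCoprime`.
-/

open Polynomial

namespace Ideal

variable {R : Type*} [CommRing R]

theorem isCoprime_of_quotient_linearEquiv_prod {I J K : Ideal R}
    (e : (R ⧸ K) ≃ₗ[R] (R ⧸ I) × (R ⧸ J)) : IsCoprime I J := by
  obtain ⟨a, ha⟩ := Quotient.mk_surjective (e 1).1
  obtain ⟨b, hb⟩ := Quotient.mk_surjective (e 1).2
  have hcyclic (y : (R ⧸ I) × (R ⧸ J)) :
      ∃ r : R, Quotient.mk I (r * a) = y.1 ∧ Quotient.mk J (r * b) = y.2 := by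
    obtain ⟨r, hr⟩ := Quotient.mk_surjective (e.symm y)
    have hy : r • e 1 = y := by
      rw [← map_smul, Algebra.smul_def, mul_one, Quotient.algebraMap_eq, hr, e.apply_symm_apply]
    refine ⟨r, ?_, ?_⟩ <;> simp [← hy, Algebra.smul_def, ← ha, ← hb]
  obtain ⟨p, hpa, hpb⟩ := hcyclic (1, 0)
  obtain ⟨q, hqa, hqb⟩ := hcyclic (0, 1)
  rw [← map_one (Quotient.mk _), Quotient.eq] at hpa hqb
  rw [Quotient.eq_zero_iff_mem] at hpb hqa
  -- `(p a) (q b) = (q a) (p b)` lies in `I`, while `p a ≡ 1 (mod I)` and `q b ≡ 1 (mod J)`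
  exact isCoprime_iff_exists.mpr
    ⟨q * a * (p * b) - (p * a - 1) * (q * b), I.sub_mem (I.mul_mem_right _ hqa)
      (I.mul_mem_right _ hpa), -(q * b - 1), J.neg_mem hqb, by ring⟩

theorem nonempty_quotient_mul_linearEquiv_prod_iff (I J : Ideal R) :
    Nonempty ((R ⧸ I * J) ≃ₗ[R] (R ⧸ I) × (R ⧸ J)) ↔ IsCoprime I J :=
  ⟨fun ⟨e⟩ => isCoprime_of_quotient_linearEquiv_prod e, fun h =>
    ⟨(AlgEquiv.ofRingEquiv (f := quotientMulEquivQuotientProd I J h) fun _ => rfl).toLinearEquiv⟩⟩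

end Ideal

theorem sylvester_eq_reindex_sylvesterMatrix (f g : ℤ[X]) :
    sylvester g f g.natDegree f.natDegree =
      (sylvesterMatrix f g).reindex (finCongr (add_comm _ _)) (finCongr (add_comm _ _)) := by
  ext i j
  induction j using Fin.addCases <;>
  · simp only [sylvester, sylvesterMatrix, Matrix.reindex_apply, Matrix.submatrix_apply,
      Matrix.of_apply, Fin.addCases_left, Fin.addCases_right, coeff_X_pow_mul', Set.mem_Icc,
      ite_and, finCongr_symm, finCongr_apply, Fin.val_cast, Fin.val_castAdd, Fin.val_natAdd,
      Nat.add_sub_cancel_left]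
    -- outside the band `j ≤ i ≤ j + deg` the coefficient vanishes for degree reasons
    split_ifs <;> first | rfl | lia | exact (coeff_eq_zero_of_natDegree_lt (by lia)).symm

theorem res_eq_resultant (f g : ℤ[X]) : res f g = g.resultant f := by
  rw [resultant, sylvester_eq_reindex_sylvesterMatrix, Matrix.det_reindex_self, res]

theorem quotient_prod_iso_iff_resultant_general (f g : Polynomial ℤ) (hg : g.Monic) :
    Nonempty ((Polynomial ℤ ⧸ Ideal.span {f * g}) ≃ₗ[Polynomial ℤ]
        (Polynomial ℤ ⧸ Ideal.span {f}) × (Polynomial ℤ ⧸ Ideal.span {g})) ↔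
      (res f g).natAbs = 1 := by
  rw [← Ideal.span_singleton_mul_span_singleton, Ideal.nonempty_quotient_mul_linearEquiv_prod_iff,
    Ideal.isCoprime_span_singleton_iff, ← Int.isUnit_iff_natAbs_eq, res_eq_resultant,
    isUnit_resultant_iff_isCoprime hg, isCoprime_comm]

/-- Theorem 5.1 (a): for monic `f, g ∈ ℤ[t]` which are coprime in `ℚ[t]`, the
`ℤ[t]`-modules `ℤ[t]/(fg)` and `ℤ[t]/(f) ⊕ ℤ[t]/(g)` are isomorphic if and only if
`|Res(f,g)| = 1`. -/
theorem quotient_prod_iso_iff_resultant (f g : Polynomial ℤ) (hf : f.Monic) (hg : g.Monic)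
    (hco : IsCoprime (f.map (Int.castRingHom ℚ)) (g.map (Int.castRingHom ℚ))) :
    Nonempty ((Polynomial ℤ ⧸ Ideal.span {f * g}) ≃ₗ[Polynomial ℤ]
        (Polynomial ℤ ⧸ Ideal.span {f}) × (Polynomial ℤ ⧸ Ideal.span {g})) ↔
      (res f g).natAbs = 1 :=
  quotient_prod_iso_iff_resultant_general f g hg
end

section
/- Let p₁, p₂ ∈ ℤ[t] be monic of positive degree. In H = ℤ[t]/(p₁p₂) with h = multiplication by t, the ideal (p₂)/(p₁p₂) is the unique h-invariant primitive ℤ-sublattice of H on which the characteristic polynomial of h is p₁, and it is isomorphic as a ℤ[t]-module to ℤ[t]/(p₁). -/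
/-- `IsCharPolyOn c N p` says that the multiplication-by-`c` endomorphism of the ring `R`
maps the `ℤ`-sublattice `N` into itself and is represented on some `ℤ`-basis of `N` by an
integer matrix whose characteristic polynomial is `p`. -/
def IsCharPolyOn {R : Type} [CommRing R] (c : R) (N : Submodule ℤ R)
    (p : Polynomial ℤ) : Prop :=
  ∃ (n : ℕ) (b : Module.Basis (Fin n) ℤ N) (A : Matrix (Fin n) (Fin n) ℤ),
    (∀ j, c * (b j : R) = ∑ i, A i j • ((b i : R))) ∧ A.charpoly = p

/-- The image of the ideal `(p₂)` in `ℤ[t]/(p₁p₂)`, viewed as a `ℤ`-sublattice. -/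
noncomputable def Ksub (p₁ p₂ : Polynomial ℤ) :
    Submodule ℤ (Polynomial ℤ ⧸ Ideal.span {p₁ * p₂}) :=
  Submodule.restrictScalars ℤ
    ((Ideal.span {p₂}).map (Ideal.Quotient.mk (Ideal.span {p₁ * p₂})))

/-!
Multiplication by `p₂` identifies `ℤ[t]/(p₁)` with `K = (p₂)/(p₁p₂)` compatibly with `t`, so the
power basis of `ℤ[t]/(p₁)` shows that `h` has characteristic polynomial `p₁` on `K`; and `K` is
primitive because a monic `p₂` dividing `c • r` with `0 ≠ c ∈ ℤ` divides `r`. Conversely, if `N`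
is `h`-invariant with characteristic polynomial `p₁`, Cayley–Hamilton gives `p₁(h) N = 0`, and
the kernel of multiplication by `p₁` on `H` is `K`. Thus `N ⊆ K` with both of rank `deg p₁`, so
`K/N` is torsion; as `H/N` is torsion-free, `N = K`.
-/

open Polynomial

namespace Polynomial

theorem Monic.dvd_of_dvd_C_mul {R : Type*} [CommRing R] [IsDomain R] {q r : R[X]}
    {c : R} (hq : q.Monic) (hc : c ≠ 0) (h : q ∣ C c * r) : q ∣ r := by
  rw [← modByMonic_eq_zero_iff_dvd hq] at h ⊢
  rw [← smul_eq_C_mul, smul_modByMonic, smul_eq_C_mul] at h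
  exact (mul_eq_zero.mp h).resolve_left (C_ne_zero.mpr hc)

end Polynomial

theorem AdjoinRoot.minpoly_root_of_monic {R : Type*} [CommRing R] [IsDomain R] {f : R[X]}
    (hf : f.Monic) : minpoly R (root f) = f := by
  refine (minpoly.unique' R _ hf (by rw [aeval_eq, mk_self]) fun q hq => ?_).symm
  rw [or_iff_not_imp_right, aeval_eq, not_not, mk_eq_zero]
  exact fun hdvd => eq_zero_of_dvd_of_degree_lt hdvd hq

namespace Ideal

variable {R : Type*} [CommRing R]

theorem mk_mem_map_span_singleton_iff (a b r : R) :
    Quotient.mk (span {a * b}) r ∈ (span {b}).map (Quotient.mk (span {a * b})) ↔ b ∣ r := by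
  rw [mem_quotient_iff_mem (span_singleton_le_span_singleton.mpr (dvd_mul_left b a)),
    mem_span_singleton]

noncomputable def mulQuotSpan (a b : R) : (R ⧸ span {a}) →ₗ[R] R ⧸ span {a * b} :=
  Submodule.mapQ _ _ (LinearMap.mulLeft R b) fun r hr => by
    obtain ⟨s, rfl⟩ := mem_span_singleton.mp hr
    exact mem_span_singleton.mpr ⟨s, by simp only [LinearMap.mulLeft_apply]; ring⟩

theorem mulQuotSpan_mk (a b r : R) :
    mulQuotSpan a b (Quotient.mk _ r) = Quotient.mk _ (b * r) := rfl

theorem injective_mulQuotSpan [IsDomain R] (a : R) {b : R} (hb : b ≠ 0) :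
    Function.Injective (mulQuotSpan a b) := by
  rw [← LinearMap.ker_eq_bot, eq_bot_iff]
  rintro x hx
  obtain ⟨r, rfl⟩ := Quotient.mk_surjective x
  rw [LinearMap.mem_ker, mulQuotSpan_mk, Quotient.eq_zero_iff_mem, mem_span_singleton,
    mul_comm a b, mul_dvd_mul_iff_left hb] at hx
  exact (Submodule.mem_bot R).mpr (Quotient.eq_zero_iff_mem.mpr (mem_span_singleton.mpr hx))

theorem range_mulQuotSpan (a b : R) :
    LinearMap.range (mulQuotSpan a b) =
      ((span {b}).map (Quotient.mk (span {a * b}))).restrictScalars R := by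
  ext x
  rw [Submodule.restrictScalars_mem, LinearMap.mem_range]
  constructor
  · rintro ⟨y, rfl⟩
    obtain ⟨s, rfl⟩ := Quotient.mk_surjective y
    exact (mk_mem_map_span_singleton_iff a b _).mpr (dvd_mul_right b s)
  · intro hx
    obtain ⟨r, rfl⟩ := Quotient.mk_surjective x
    obtain ⟨s, rfl⟩ := (mk_mem_map_span_singleton_iff a b r).mp hx
    exact ⟨Quotient.mk _ s, rfl⟩

theorem mem_map_span_singleton_of_mk_mul_eq_zero [IsDomain R] {a : R} (ha : a ≠ 0) (b : R)
    {x : R ⧸ span {a * b}} (hx : Quotient.mk _ a * x = 0) :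
    x ∈ (span {b}).map (Quotient.mk (span {a * b})) := by
  obtain ⟨r, rfl⟩ := Quotient.mk_surjective x
  rw [← map_mul, Quotient.eq_zero_iff_mem, mem_span_singleton] at hx
  exact (mk_mem_map_span_singleton_iff a b r).mpr ((mul_dvd_mul_iff_left ha).mp hx)

end Ideal

namespace Submodule

theorem eq_of_le_of_finrank_eq_of_primitive {R M : Type*} [CommRing R] [IsDomain R]
    [AddCommGroup M] [Module R M] {N K : Submodule R M} [Module.Finite R K] (hle : N ≤ K)
    (hrank : Module.finrank R N = Module.finrank R K)
    (htf : ∀ (x : M ⧸ N) (c : R), c ≠ 0 → c • x = 0 → x = 0) : N = K := by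
  let N' := N.comap K.subtype
  have htors : Module.finrank R (K ⧸ N') = 0 := by
    have := N'.finrank_quotient_add_finrank
    rw [(comapSubtypeEquivOfLe hle).finrank_eq, hrank] at this
    omega
  refine le_antisymm hle fun x hx => ?_
  obtain ⟨c, hc, hcx⟩ := Module.finrank_eq_zero_iff.mp htors (N'.mkQ ⟨x, hx⟩)
  rw [← map_smul, mkQ_apply, Quotient.mk_eq_zero] at hcx
  have := htf (N.mkQ x) c hc (by rwa [← map_smul, mkQ_apply, Quotient.mk_eq_zero])
  rwa [mkQ_apply, Quotient.mk_eq_zero] at this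

theorem coe_aeval_apply_of_coe_apply {S R : Type*} [CommRing S] [CommRing R] [Algebra S R]
    {N : Submodule S R} {c : R} {f : Module.End S N} (hf : ∀ y, (f y : R) = c * y) (q : S[X])
    (y : N) : (aeval f q y : R) = aeval c q * y := by
  have hpow : ∀ (n : ℕ) (y : N), ((f ^ n) y : R) = c ^ n * y := by
    intro n
    induction n with
    | zero => simp
    | succ n ih => intro y; rw [pow_succ, Module.End.mul_apply, ih, hf, pow_succ, mul_assoc]
  induction q using Polynomial.induction_on' with
  | add q r hq hr => simp [add_mul, hq, hr]
  | monomial n a => simp [hpow, Algebra.smul_def, mul_assoc]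

end Submodule

namespace IsCharPolyOn

variable {R : Type} [CommRing R] {c : R} {N : Submodule ℤ R} {p : ℤ[X]}

theorem aeval_mul_eq_zero (h : IsCharPolyOn c N p) {x : R} (hx : x ∈ N) :
    aeval c p * x = 0 := by
  obtain ⟨n, b, A, hA, rfl⟩ := h
  have : Module.Free ℤ N := .of_basis b
  have : Module.Finite ℤ N := .of_basis b
  have hf : N.subtype ∘ₗ Matrix.toLin b b A = LinearMap.mulLeft ℤ c ∘ₗ N.subtype :=
    b.ext fun j => by simp [Matrix.toLin_self, hA j]
  have := Submodule.coe_aeval_apply_of_coe_apply (LinearMap.congr_fun hf) A.charpoly ⟨x, hx⟩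
  rw [← Matrix.charpoly_toLin A b, LinearMap.aeval_self_charpoly] at this
  simpa using this.symm

theorem finrank_eq (h : IsCharPolyOn c N p) : Module.finrank ℤ N = p.natDegree := by
  obtain ⟨n, b, A, -, rfl⟩ := h
  rw [Module.finrank_eq_card_basis b, Matrix.charpoly_natDegree_eq_dim]

theorem of_linearEquiv (hp : p.Monic) (e : AdjoinRoot p ≃ₗ[ℤ] N)
    (he : ∀ y, (e (AdjoinRoot.root p * y) : R) = c * e y) : IsCharPolyOn c N p := by
  let pb := AdjoinRoot.powerBasis' hp
  let M := Algebra.leftMulMatrix pb.basis pb.gen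
  refine ⟨pb.dim, pb.basis.map e, M, fun j => ?_, ?_⟩
  · have hgen : pb.gen * pb.basis j = ∑ i, M i j • pb.basis i := by
      simp_rw [M, Algebra.leftMulMatrix_eq_repr_mul]
      exact (pb.basis.sum_repr _).symm
    rw [Module.Basis.map_apply, ← he, ← AdjoinRoot.powerBasis'_gen hp, hgen, map_sum,
      Submodule.coe_sum]
    simp only [map_smul, Submodule.coe_smul, Module.Basis.map_apply]
  · rw [charpoly_leftMulMatrix, AdjoinRoot.powerBasis'_gen, AdjoinRoot.minpoly_root_of_monic hp]

end IsCharPolyOn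

section Ksub

variable {p₁ p₂ : ℤ[X]}

theorem mk_mem_Ksub_iff (r : ℤ[X]) :
    Ideal.Quotient.mk (Ideal.span {p₁ * p₂}) r ∈ Ksub p₁ p₂ ↔ p₂ ∣ r :=
  Ideal.mk_mem_map_span_singleton_iff p₁ p₂ r

theorem torsionFree_quotient_Ksub (h₂ : p₂.Monic)
    (x : (ℤ[X] ⧸ Ideal.span {p₁ * p₂}) ⧸ Ksub p₁ p₂) (c : ℤ) (hc : c ≠ 0) (hcx : c • x = 0) :
    x = 0 := by
  obtain ⟨y, rfl⟩ := Submodule.Quotient.mk_surjective _ x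
  obtain ⟨r, rfl⟩ := Ideal.Quotient.mk_surjective y
  rw [← Submodule.Quotient.mk_smul, Submodule.Quotient.mk_eq_zero] at hcx
  rw [← map_zsmul, smul_eq_C_mul, mk_mem_Ksub_iff] at hcx
  rw [Submodule.Quotient.mk_eq_zero, mk_mem_Ksub_iff]
  exact h₂.dvd_of_dvd_C_mul hc hcx

theorem exists_linearEquiv_Ksub (hp₂ : p₂ ≠ 0) :
    ∃ e : (ℤ[X] ⧸ Ideal.span {p₁}) ≃ₗ[ℤ] Ksub p₁ p₂, ∀ y,
      (e (Ideal.Quotient.mk (Ideal.span {p₁}) X * y) : ℤ[X] ⧸ Ideal.span {p₁ * p₂}) =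
        Ideal.Quotient.mk (Ideal.span {p₁ * p₂}) X * e y := by
  let f := (Ideal.mulQuotSpan p₁ p₂).restrictScalars ℤ
  have hrange : LinearMap.range f = Ksub p₁ p₂ := by
    rw [LinearMap.range_restrictScalars, Ideal.range_mulQuotSpan]
    rfl
  refine ⟨(LinearEquiv.ofInjective f (Ideal.injective_mulQuotSpan p₁ hp₂)).trans
    (LinearEquiv.ofEq _ _ hrange), fun y => ?_⟩
  change Ideal.mulQuotSpan p₁ p₂ ((X : ℤ[X]) • y) = (X : ℤ[X]) • Ideal.mulQuotSpan p₁ p₂ y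
  exact map_smul _ X y

end Ksub

theorem Ksub_unique_primitive_invariant_general (p₁ p₂ : Polynomial ℤ)
    (h₁ : p₁.Monic) (h₂ : p₂.Monic) :
    (∀ x ∈ Ksub p₁ p₂,
        Ideal.Quotient.mk (Ideal.span {p₁ * p₂}) Polynomial.X * x ∈ Ksub p₁ p₂) ∧
    (∀ (x : (Polynomial ℤ ⧸ Ideal.span {p₁ * p₂}) ⧸ Ksub p₁ p₂) (c : ℤ),
        c ≠ 0 → c • x = 0 → x = 0) ∧
    IsCharPolyOn (Ideal.Quotient.mk (Ideal.span {p₁ * p₂}) Polynomial.X) (Ksub p₁ p₂) p₁ ∧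
    (∃ e : (Polynomial ℤ ⧸ Ideal.span {p₁}) ≃ₗ[ℤ] Ksub p₁ p₂,
        ∀ y, ((e (Ideal.Quotient.mk (Ideal.span {p₁}) Polynomial.X * y) :
              Polynomial ℤ ⧸ Ideal.span {p₁ * p₂}))
          = Ideal.Quotient.mk (Ideal.span {p₁ * p₂}) Polynomial.X * (e y :
              Polynomial ℤ ⧸ Ideal.span {p₁ * p₂})) ∧
    (∀ N : Submodule ℤ (Polynomial ℤ ⧸ Ideal.span {p₁ * p₂}),
        (∀ x ∈ N, Ideal.Quotient.mk (Ideal.span {p₁ * p₂}) Polynomial.X * x ∈ N) →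
        (∀ (x : (Polynomial ℤ ⧸ Ideal.span {p₁ * p₂}) ⧸ N) (c : ℤ),
            c ≠ 0 → c • x = 0 → x = 0) →
        IsCharPolyOn (Ideal.Quotient.mk (Ideal.span {p₁ * p₂}) Polynomial.X) N p₁ →
        N = Ksub p₁ p₂) := by
  obtain ⟨e, he⟩ := exists_linearEquiv_Ksub (p₁ := p₁) h₂.ne_zero
  have hchar : IsCharPolyOn _ (Ksub p₁ p₂) p₁ := IsCharPolyOn.of_linearEquiv h₁ e he
  refine ⟨fun x hx => Ideal.mul_mem_left _ _ hx, torsionFree_quotient_Ksub h₂, hchar, ⟨e, he⟩,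
    fun N _ hN hcharN => ?_⟩
  have haeval : aeval (Ideal.Quotient.mk (Ideal.span {p₁ * p₂}) X) p₁ =
      Ideal.Quotient.mk _ p₁ := AdjoinRoot.aeval_eq p₁
  have hle : N ≤ Ksub p₁ p₂ := fun x hx =>
    Ideal.mem_map_span_singleton_of_mk_mul_eq_zero h₁.ne_zero p₂
      (haeval ▸ hcharN.aeval_mul_eq_zero hx)
  have : Module.Finite ℤ (Ksub p₁ p₂) := (AdjoinRoot.powerBasis' h₁).finite.equiv e
  exact Submodule.eq_of_le_of_finrank_eq_of_primitive hle
    (by rw [hcharN.finrank_eq, hchar.finrank_eq]) hN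

/-- Lemma 2.8 (a): in `H = ℤ[t]/(p₁p₂)` with `h` = multiplication by `t`, the sublattice
`(p₂)/(p₁p₂)` is `h`-invariant and primitive, the characteristic polynomial of `h` on it
is `p₁`, it is isomorphic to `ℤ[t]/(p₁)` as a `ℤ[t]`-module, and it is the unique
`h`-invariant primitive sublattice of `H` on which the characteristic polynomial of `h`
is `p₁`. -/
theorem Ksub_unique_primitive_invariant (p₁ p₂ : Polynomial ℤ)
    (h₁ : p₁.Monic) (h₂ : p₂.Monic) (hd₁ : 0 < p₁.natDegree) (hd₂ : 0 < p₂.natDegree) :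
    (∀ x ∈ Ksub p₁ p₂,
        Ideal.Quotient.mk (Ideal.span {p₁ * p₂}) Polynomial.X * x ∈ Ksub p₁ p₂) ∧
    (∀ (x : (Polynomial ℤ ⧸ Ideal.span {p₁ * p₂}) ⧸ Ksub p₁ p₂) (c : ℤ),
        c ≠ 0 → c • x = 0 → x = 0) ∧
    IsCharPolyOn (Ideal.Quotient.mk (Ideal.span {p₁ * p₂}) Polynomial.X) (Ksub p₁ p₂) p₁ ∧
    (∃ e : (Polynomial ℤ ⧸ Ideal.span {p₁}) ≃ₗ[ℤ] Ksub p₁ p₂,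
        ∀ y, ((e (Ideal.Quotient.mk (Ideal.span {p₁}) Polynomial.X * y) :
              Polynomial ℤ ⧸ Ideal.span {p₁ * p₂}))
          = Ideal.Quotient.mk (Ideal.span {p₁ * p₂}) Polynomial.X * (e y :
              Polynomial ℤ ⧸ Ideal.span {p₁ * p₂})) ∧
    (∀ N : Submodule ℤ (Polynomial ℤ ⧸ Ideal.span {p₁ * p₂}),
        (∀ x ∈ N, Ideal.Quotient.mk (Ideal.span {p₁ * p₂}) Polynomial.X * x ∈ N) →
        (∀ (x : (Polynomial ℤ ⧸ Ideal.span {p₁ * p₂}) ⧸ N) (c : ℤ),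
            c ≠ 0 → c • x = 0 → x = 0) →
        IsCharPolyOn (Ideal.Quotient.mk (Ideal.span {p₁ * p₂}) Polynomial.X) N p₁ →
        N = Ksub p₁ p₂) :=
  Ksub_unique_primitive_invariant_general p₁ p₂ h₁ h₂
end

section
/- In the group ring ℤ[μ(ℂ)], for a prime p and integer k ≥ 1: Ψ_{p^k} · Ψ_{p^k} = ((p−2)/(p−1))·φ(p^k)·Ψ_{p^k} + φ(p^k)·Σ_{l=0}^{k−1} Ψ_{p^l}. (Note (p−2)/(p−1)·φ(p^k) = (p−2)p^{k−1} is an integer.) -/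
/-- The group `μ(ℂ)` of all complex roots of unity, as a subgroup of `ℂˣ`. -/
def muC : Subgroup ℂˣ where
  carrier := {x | ∃ n : ℕ, 0 < n ∧ x ^ n = 1}
  one_mem' := ⟨1, one_pos, one_pow 1⟩
  mul_mem' := by
    rintro a b ⟨n, hn, ha⟩ ⟨m, hm, hb⟩
    refine ⟨n * m, Nat.mul_pos hn hm, ?_⟩
    rw [mul_pow, pow_mul, ha, one_pow, pow_mul', hb, one_pow, one_mul]
  inv_mem' := by
    rintro a ⟨n, hn, ha⟩
    exact ⟨n, hn, by rw [inv_pow, ha, inv_one]⟩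

/-- The primitive `m`-th root of unity `e(1/m) = exp(2πi/m)` as a unit of `ℂ`. -/
noncomputable def zetaU (m : ℕ) : ℂˣ :=
  Units.mk0 (Complex.exp (2 * Real.pi * Complex.I / m)) (Complex.exp_ne_zero _)

lemma zetaU_pow (m : ℕ) (hm : 0 < m) : zetaU m ^ m = 1 := by
  have hm' : (m : ℂ) ≠ 0 := Nat.cast_ne_zero.mpr hm.ne'
  ext
  simp only [zetaU, Units.val_pow_eq_pow_val, Units.val_mk0, Units.val_one]
  rw [← Complex.exp_nat_mul]
  have h : (m : ℂ) * (2 * Real.pi * Complex.I / m) = 2 * Real.pi * Complex.I := by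
    field_simp
  rw [h, Complex.exp_two_pi_mul_I]

/-- `e(1/m)` as an element of the group `μ(ℂ)` of roots of unity (junk value `1` for
`m = 0`). -/
noncomputable def zetaG (m : ℕ) : muC :=
  if h : 0 < m then ⟨zetaU m, m, h, zetaU_pow m h⟩ else 1

/-- `Λ_m ∈ ℤ[μ(ℂ)]`, the divisor of `t^m - 1`: the formal sum of all `m`-th roots of
unity. -/
noncomputable def Lam (m : ℕ) : MonoidAlgebra ℤ muC :=
  ∑ k ∈ Finset.range m, MonoidAlgebra.single (zetaG m ^ k) 1

/-- `Ψ_m ∈ ℤ[μ(ℂ)]`, the divisor of the cyclotomic polynomial `Φ_m`: the formal sum of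
all primitive `m`-th roots of unity. -/
noncomputable def Psi (m : ℕ) : MonoidAlgebra ℤ muC :=
  ∑ k ∈ (Finset.range m).filter (fun k => Nat.Coprime k m),
    MonoidAlgebra.single (zetaG m ^ k) 1


/-! Index the primitive `N`-th roots of unity by the units of `ZMod N` via `x ↦ e(x/N)`. Then
`Ψ_N² = ∑_r c(r) e(r/N)`, where `c(r)` counts the units `x` for which `r - x` is a unit too. For
`N = p^k` the ring `ZMod N` is local, so `c(r) = #units - #nonunits = (p-2) p^(k-1)` when `r` is a
unit and `c(r) = #units = φ(p^k)` otherwise. The nonunits are the multiples of `p`, whose roots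
are the `p^(k-1)`-th roots of unity, and `Λ_(p^(k-1)) = ∑_(l<k) Ψ_(p^l)`. -/

open Finset

section Counting

theorem Finset.sum_sum_add_eq_sum_card_smul {A M : Type*} [AddCommGroup A] [Fintype A]
    [DecidableEq A] [AddCommMonoid M] (s : Finset A) (f : A → M) :
    ∑ x ∈ s, ∑ y ∈ s, f (x + y) = ∑ r, #{x ∈ s | r - x ∈ s} • f r := by
  have shift (x : A) : ∑ y ∈ s, f (x + y) = ∑ r, if r - x ∈ s then f r else 0 := by
    rw [← Fintype.sum_equiv (Equiv.addLeft x) (fun y => if y ∈ s then f (x + y) else 0),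
      ← sum_filter, filter_mem_eq_inter, univ_inter]
    intro y
    simp
  simp_rw [shift]
  rw [sum_comm]
  refine sum_congr rfl fun r _ => ?_
  rw [← sum_filter, sum_const]

theorem card_filter_isUnit {M : Type*} [Monoid M] [Fintype M] [Fintype Mˣ]
    [DecidablePred (IsUnit : M → Prop)] : #{x : M | IsUnit x} = Fintype.card Mˣ := by
  rw [← card_univ, ← card_map ⟨Units.val, Units.val_injective⟩]
  congr 1
  ext x
  rw [mem_filter]
  simp [IsUnit, eq_comm]

variable {R : Type*} [CommRing R] [Fintype R] [DecidablePred (IsUnit : R → Prop)]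

theorem card_filter_isUnit_sub (r : R) : #{x | IsUnit (r - x)} = #{x : R | IsUnit x} :=
  card_nbij' (r - ·) (r - ·) (fun x hx => by simpa using hx) (fun x hx => by simpa using hx)
    (fun x _ => sub_sub_cancel r x) (fun x _ => sub_sub_cancel r x)

variable [IsLocalRing R]

theorem IsLocalRing.card_isUnit_and_isUnit_sub_of_not_isUnit {r : R} (hr : ¬IsUnit r) :
    #{x | IsUnit x ∧ IsUnit (r - x)} = #{x : R | IsUnit x} := by
  refine congrArg card (filter_congr fun x _ => and_iff_left_of_imp fun hx => ?_)
  refine (IsLocalRing.isUnit_or_isUnit_of_isUnit_add (a := r - x) (b := -r) ?_).resolve_right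
    (by simpa using hr)
  convert hx.neg using 1
  abel

theorem IsLocalRing.card_isUnit_and_isUnit_sub_of_isUnit {r : R} (hr : IsUnit r) :
    #{x | IsUnit x ∧ IsUnit (r - x)} + #{x : R | ¬IsUnit x} = #{x : R | IsUnit x} := by
  classical
  have hcover : ({x | IsUnit x} : Finset R) ∪ ({x | IsUnit (r - x)} : Finset R) = univ := by
    refine eq_univ_of_forall fun x => ?_
    simpa [mem_union] using IsLocalRing.isUnit_or_isUnit_of_isUnit_add (a := x) (b := r - x)
      (by simpa using hr)
  have := card_union_add_card_inter ({x | IsUnit x} : Finset R) ({x | IsUnit (r - x)} : Finset R)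
  rw [hcover, ← filter_and, card_filter_isUnit_sub, ← card_filter_add_card_filter_not
    (s := univ) (p := fun x => IsUnit x)] at this
  omega

end Counting

theorem orderOf_zetaG {m : ℕ} (hm : 0 < m) : orderOf (zetaG m) = m := by
  rw [zetaG, dif_pos hm]
  refine (Subgroup.orderOf_mk _ _).trans ?_
  rw [← orderOf_units]
  exact ((Complex.isPrimitiveRoot_exp m hm.ne').eq_orderOf).symm

theorem zetaG_mul_pow {d : ℕ} (hd : d ≠ 0) (n : ℕ) : zetaG (d * n) ^ d = zetaG n := by
  rcases n.eq_zero_or_pos with rfl | hn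
  · simp [zetaG]
  have hdn : 0 < d * n := Nat.mul_pos (Nat.pos_of_ne_zero hd) hn
  rw [zetaG, zetaG, dif_pos hdn, dif_pos hn]
  ext
  simp only [SubmonoidClass.mk_pow, Units.val_pow_eq_pow_val, zetaU, Units.val_mk0,
    ← Complex.exp_nat_mul]
  congr 1
  push_cast
  field_simp

noncomputable def zetaPow (N : ℕ) (x : ZMod N) : muC :=
  zetaG N ^ x.val

section zetaPow

variable {N : ℕ} [NeZero N]

theorem zetaPow_natCast (n : ℕ) : zetaPow N n = zetaG N ^ n := by
  rw [zetaPow, pow_eq_pow_iff_modEq, orderOf_zetaG (NeZero.pos N), ZMod.val_natCast]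
  exact Nat.mod_modEq n N

theorem zetaPow_add (x y : ZMod N) : zetaPow N (x + y) = zetaPow N x * zetaPow N y := by
  rw [← ZMod.natCast_zmod_val x, ← ZMod.natCast_zmod_val y, ← Nat.cast_add, zetaPow_natCast,
    zetaPow_natCast, zetaPow_natCast, pow_add]

theorem sum_range_natCast_eq_sum_zmod {M : Type*} [AddCommMonoid M] (g : ZMod N → M) :
    ∑ i ∈ range N, g i = ∑ x, g x :=
  sum_nbij' (↑) ZMod.val (by simp) (fun x _ => by simpa using x.val_lt)
    (fun i hi => ZMod.val_cast_of_lt (by simpa using hi)) (fun x _ => ZMod.natCast_zmod_val x)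
    (fun _ _ => rfl)

variable (N)

theorem Lam_eq_sum : Lam N = ∑ x : ZMod N, MonoidAlgebra.of ℤ muC (zetaPow N x) := by
  rw [Lam, ← sum_range_natCast_eq_sum_zmod]
  simp [zetaPow_natCast]

theorem Psi_eq_sum_isUnit :
    Psi N = ∑ x : ZMod N with IsUnit x, MonoidAlgebra.of ℤ muC (zetaPow N x) := by
  rw [Psi, sum_filter, sum_filter, ← sum_range_natCast_eq_sum_zmod]
  simp [ZMod.isUnit_iff_coprime, zetaPow_natCast]

end zetaPow

section PrimePower

variable {p : ℕ} [hp : Fact p.Prime]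

theorem isUnit_natCast_zmod_prime_pow_iff {m : ℕ} (hm : m ≠ 0) (n : ℕ) :
    IsUnit (n : ZMod (p ^ m)) ↔ ¬p ∣ n := by
  rw [ZMod.isUnit_iff_coprime, Nat.coprime_pow_right_iff (Nat.pos_of_ne_zero hm),
    Nat.coprime_comm, hp.out.coprime_iff_not_dvd]

theorem isLocalRing_zmod_prime_pow {m : ℕ} (hm : m ≠ 0) : IsLocalRing (ZMod (p ^ m)) := by
  have : Nontrivial (ZMod (p ^ m)) :=
    ZMod.nontrivial_iff.mpr (Nat.one_lt_pow hm hp.out.one_lt).ne'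
  refine IsLocalRing.of_nonunits_add fun a b ha hb => ?_
  rw [← ZMod.natCast_zmod_val a] at ha
  rw [← ZMod.natCast_zmod_val b] at hb
  rw [← ZMod.natCast_zmod_val a, ← ZMod.natCast_zmod_val b, ← Nat.cast_add]
  simp only [mem_nonunits_iff, isUnit_natCast_zmod_prime_pow_iff hm, not_not] at ha hb ⊢
  exact dvd_add ha hb

theorem sum_not_isUnit_zmod_prime_pow {M : Type*} [AddCommMonoid M] (m : ℕ)
    (f : ZMod (p ^ (m + 1)) → M) :
    ∑ x with ¬IsUnit x, f x = ∑ j ∈ range (p ^ m), f ↑(p * j) := by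
  have hunit := isUnit_natCast_zmod_prime_pow_iff (p := p) m.succ_ne_zero
  have hmul_lt {j : ℕ} (hj : j < p ^ m) : p * j < p ^ (m + 1) := by
    rw [pow_succ']
    exact Nat.mul_lt_mul_of_pos_left hj hp.out.pos
  have hdvd {x : ZMod (p ^ (m + 1))} (hx : ¬IsUnit x) : p ∣ x.val := by
    rwa [← ZMod.natCast_zmod_val x, hunit, not_not] at hx
  refine sum_nbij' (fun x => x.val / p) (fun j => ↑(p * j)) ?_ ?_ ?_ ?_ ?_
  · intro x _
    simpa [Nat.div_lt_iff_lt_mul hp.out.pos, ← pow_succ] using x.val_lt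
  · intro j _
    simp [hunit]
  · intro x hx
    simp [Nat.mul_div_cancel' (hdvd (by simpa using hx))]
  · intro j hj
    rw [ZMod.val_cast_of_lt (hmul_lt (by simpa using hj)), Nat.mul_div_cancel_left j hp.out.pos]
  · intro x hx
    simp [Nat.mul_div_cancel' (hdvd (by simpa using hx))]

theorem card_not_isUnit_zmod_prime_pow (m : ℕ) :
    #{x : ZMod (p ^ (m + 1)) | ¬IsUnit x} = p ^ m := by
  rw [card_eq_sum_ones, sum_not_isUnit_zmod_prime_pow, sum_const, card_range, smul_eq_mul,
    mul_one]

theorem zetaPow_prime_pow_natCast_mul (m j : ℕ) :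
    zetaPow (p ^ (m + 1)) ↑(p * j) = zetaG (p ^ m) ^ j := by
  rw [zetaPow_natCast, pow_mul, pow_succ', zetaG_mul_pow hp.out.ne_zero]

theorem sum_not_isUnit_zetaPow_prime_pow (m : ℕ) :
    ∑ x : ZMod (p ^ (m + 1)) with ¬IsUnit x, MonoidAlgebra.of ℤ muC (zetaPow _ x)
      = Lam (p ^ m) := by
  rw [sum_not_isUnit_zmod_prime_pow, Lam]
  simp only [MonoidAlgebra.of_apply, zetaPow_prime_pow_natCast_mul]

theorem Lam_prime_pow (m : ℕ) : Lam (p ^ m) = ∑ l ∈ range (m + 1), Psi (p ^ l) := by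
  induction m with
  | zero => simp [Lam, Psi]
  | succ m ih =>
    rw [Lam_eq_sum, ← sum_filter_add_sum_filter_not univ IsUnit, ← Psi_eq_sum_isUnit,
      sum_not_isUnit_zetaPow_prime_pow, ih, sum_range_succ _ (m + 1), add_comm]

end PrimePower

section Square

variable (N : ℕ) [NeZero N]

theorem Psi_mul_self_eq_sum :
    Psi N * Psi N = ∑ r : ZMod N,
      #{x | IsUnit x ∧ IsUnit (r - x)} • MonoidAlgebra.of ℤ muC (zetaPow N r) := by
  rw [Psi_eq_sum_isUnit, sum_mul_sum]
  simp_rw [← map_mul, ← zetaPow_add]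
  rw [sum_sum_add_eq_sum_card_smul _ fun r => MonoidAlgebra.of ℤ muC (zetaPow N r)]
  simp only [filter_filter, mem_filter, mem_univ, true_and]

theorem Psi_mul_self_of_isLocalRing [IsLocalRing (ZMod N)] :
    Psi N * Psi N
      = ((#{x : ZMod N | IsUnit x} : ℤ) - #{x : ZMod N | ¬IsUnit x}) • Psi N
        + (#{x : ZMod N | IsUnit x} : ℤ) •
          ∑ x : ZMod N with ¬IsUnit x, MonoidAlgebra.of ℤ muC (zetaPow N x) := by
  rw [Psi_mul_self_eq_sum, ← sum_filter_add_sum_filter_not univ IsUnit, Psi_eq_sum_isUnit,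
    smul_sum, smul_sum]
  congr 1 <;> refine sum_congr rfl fun r hr => ?_ <;> rw [← Nat.cast_smul_eq_nsmul ℤ]
  · rw [← IsLocalRing.card_isUnit_and_isUnit_sub_of_isUnit (mem_filter.mp hr).2]
    push_cast
    rw [add_sub_cancel_right]
  · rw [IsLocalRing.card_isUnit_and_isUnit_sub_of_not_isUnit (mem_filter.mp hr).2]

end Square

/-- Equation (7.16): in `ℤ[μ(ℂ)]`, for a prime `p` and `k ≥ 1`,
`Ψ_{p^k} · Ψ_{p^k} = ((p-2)/(p-1))·φ(p^k)·Ψ_{p^k} + φ(p^k)·Σ_{l=0}^{k-1} Ψ_{p^l}`,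
where `((p-2)/(p-1))·φ(p^k) = (p-2)·p^{k-1}`. -/
theorem Psi_prime_pow_mul_self (p k : ℕ) (hp : p.Prime) (hk : 1 ≤ k) :
    Psi (p ^ k) * Psi (p ^ k)
      = (((p : ℤ) - 2) * (p : ℤ) ^ (k - 1)) • Psi (p ^ k)
        + (Nat.totient (p ^ k) : ℤ) • ∑ l ∈ Finset.range k, Psi (p ^ l) := by
  have := Fact.mk hp
  obtain ⟨m, rfl⟩ := Nat.exists_eq_add_of_le' hk
  have := isLocalRing_zmod_prime_pow (p := p) m.succ_ne_zero
  rw [Psi_mul_self_of_isLocalRing, sum_not_isUnit_zetaPow_prime_pow, Lam_prime_pow,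
    card_filter_isUnit, ZMod.card_units_eq_totient, card_not_isUnit_zmod_prime_pow,
    Nat.totient_prime_pow_succ hp, Nat.add_sub_cancel]
  congr 2
  push_cast [Nat.cast_sub hp.one_le]
  ring
end
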